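/- arXiv:1809.10421 — 6 statements merged into one kernel-verified Lean document; each statement's English description precedes it below -/
import Mathlib

section
/- If the entropy inequality H(f(X)) ≤ Σ_{i=1}^n α_i H(f_i(X)) holds for every random variable X supported on a finite set A ⊆ 𝒳, where α_1,...,α_n are positive reals, then |f(A)| ≤ Π_{i=1}^n |f_i(A)|^{α_i}. -/
attribute [local instance] Classical.propDecidable

/-- Shannon entropy of a discrete random variable with distribution `p`. -/
noncomputable def shannonEntropy {α : Type*} (p : PMF α) : ℝ :=
  ∑' a, Real.negMulLog ((p a).toReal)

/-!
Let `X := s(U)`, where `U` is uniform on `f(A)` and `s` is a section of `f` over `f(A)` with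
values in `A`. Then `f(X) = U` has entropy `log |f(A)|`, while `f_i(X)` is supported on `f_i(A)`,
so by Jensen's inequality for `negMulLog` its entropy is at most `log |f_i(A)|`. Exponentiating the
hypothesis for this `X` gives the bound.
-/

open Real Finset

lemma Real.sum_negMulLog_le_log_card {ι : Type*} (s : Finset ι) (q : ι → ℝ)
    (hq₀ : ∀ i ∈ s, 0 ≤ q i) (hq₁ : ∑ i ∈ s, q i = 1) :
    ∑ i ∈ s, negMulLog (q i) ≤ log s.card := by
  have hs : (0 : ℝ) < s.card := by
    exact_mod_cast (Finset.nonempty_of_sum_ne_zero (by rw [hq₁]; exact one_ne_zero)).card_pos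
  have jensen := concaveOn_negMulLog.le_map_sum (t := s) (w := fun _ => (s.card : ℝ)⁻¹)
    (p := q) (fun _ _ => by positivity) (by simp [hs.ne']) hq₀
  simp only [smul_eq_mul, ← mul_sum, hq₁, mul_one] at jensen
  rw [negMulLog, log_inv, neg_mul_neg] at jensen
  exact le_of_mul_le_mul_left jensen (inv_pos.2 hs)

namespace PMF

variable {α β : Type*}

lemma map_eq_map_of_eqOn_support (p : PMF α) {g h : α → β} (hgh : Set.EqOn g h p.support) :
    p.map g = p.map h := by
  ext b
  simp only [map_apply]
  refine tsum_congr fun a => ?_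
  by_cases ha : p a = 0
  · simp [ha]
  · rw [hgh ((mem_support_iff p a).2 ha)]

lemma toReal_sum_eq_one_of_support_subset (p : PMF α) {s : Finset α} (hs : p.support ⊆ s) :
    ∑ a ∈ s, (p a).toReal = 1 := by
  have hsum : ∑ a ∈ s, p a = 1 :=
    (tsum_eq_sum fun a ha => (p.apply_eq_zero_iff a).2 fun h => ha (hs h)).symm.trans p.tsum_coe
  rw [← ENNReal.toReal_sum fun a _ => p.apply_ne_top a, hsum, ENNReal.toReal_one]

lemma shannonEntropy_le_log_card (p : PMF α) {s : Finset α} (hs : p.support ⊆ s) :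
    shannonEntropy p ≤ log s.card := by
  rw [shannonEntropy, tsum_eq_sum (s := s)]
  · exact sum_negMulLog_le_log_card s _ (fun _ _ => ENNReal.toReal_nonneg)
      (p.toReal_sum_eq_one_of_support_subset hs)
  · intro a ha
    rw [(p.apply_eq_zero_iff a).2 fun h => ha (hs h)]
    simp

lemma shannonEntropy_map_le_log_card_image (p : PMF α) (g : α → β) {A : Finset α}
    (hA : p.support ⊆ A) : shannonEntropy (p.map g) ≤ log (A.image g).card := by
  refine (p.map g).shannonEntropy_le_log_card ?_
  rw [support_map, coe_image]
  exact Set.image_mono hA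

lemma shannonEntropy_uniformOfFinset (s : Finset α) (hs : s.Nonempty) :
    shannonEntropy (uniformOfFinset s hs) = log s.card := by
  have hcard : (s.card : ℝ) ≠ 0 := by exact_mod_cast hs.card_pos.ne'
  rw [shannonEntropy, tsum_eq_sum (s := s) fun a ha => by simp [ha]]
  rw [sum_congr rfl fun a ha => by rw [uniformOfFinset_apply_of_mem (hs := hs) ha], sum_const,
    nsmul_eq_mul]
  simp only [ENNReal.toReal_inv, ENNReal.toReal_natCast, negMulLog, log_inv]
  field_simp

lemma exists_support_subset_map_eq_uniformOfFinset (f : α → β) {A : Finset α}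
    (hA : A.Nonempty) :
    ∃ p : PMF α, p.support ⊆ A ∧ p.map f = uniformOfFinset (A.image f) (hA.image f) := by
  have : Nonempty α := ⟨hA.choose⟩
  have hsection : ∀ y ∈ A.image f, Function.invFunOn f A y ∈ A ∧
      f (Function.invFunOn f A y) = y := fun y hy =>
    Function.invFunOn_pos (by simpa using hy)
  refine ⟨(uniformOfFinset (A.image f) (hA.image f)).map (Function.invFunOn f A), ?_, ?_⟩
  · rw [support_map, support_uniformOfFinset]
    rintro _ ⟨y, hy, rfl⟩
    exact (hsection y hy).1
  · rw [map_comp, map_eq_map_of_eqOn_support _ (h := id), map_id]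
    intro y hy
    exact (hsection y ((mem_support_uniformOfFinset_iff _ _).1 hy)).2

end PMF

lemma Real.le_prod_rpow_of_log_le {ι : Type*} {s : Finset ι} {M : ℝ} {N α : ι → ℝ}
    (hM : 0 < M) (hN : ∀ i ∈ s, 0 < N i) (h : log M ≤ ∑ i ∈ s, α i * log (N i)) :
    M ≤ ∏ i ∈ s, N i ^ α i := by
  rwa [← log_le_log_iff hM (prod_pos fun i hi => rpow_pos_of_pos (hN i hi) _),
    log_prod fun i hi => (rpow_pos_of_pos (hN i hi) _).ne',
    sum_congr rfl fun i hi => log_rpow (hN i hi) _]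

/-- if `H(f(X)) ≤ ∑ i, α i * H(f_i(X))` holds for every random variable `X`
supported on the finite set `A ⊆ 𝒳`, with all `α i > 0`, then
`|f(A)| ≤ ∏ i, |f_i(A)| ^ α i`. -/
theorem stmt7 {𝒳 Y : Type*} {n : ℕ} (f : 𝒳 → Y) (Yi : Fin n → Type*)
    (fi : ∀ i, 𝒳 → Yi i) (α : Fin n → ℝ) (hα : ∀ i, 0 < α i)
    (A : Finset 𝒳)
    (hent : ∀ p : PMF 𝒳, p.support ⊆ ↑A →
      shannonEntropy (p.map f) ≤ ∑ i, α i * shannonEntropy (p.map (fi i))) :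
    ((A.image f).card : ℝ) ≤ ∏ i, ((A.image (fi i)).card : ℝ) ^ (α i) := by
  rcases A.eq_empty_or_nonempty with rfl | hA
  · simp only [image_empty, card_empty, Nat.cast_zero]
    exact prod_nonneg fun i _ => by positivity
  obtain ⟨p, hpA, hpf⟩ := PMF.exists_support_subset_map_eq_uniformOfFinset f hA
  refine le_prod_rpow_of_log_le (by exact_mod_cast (hA.image f).card_pos)
    (fun i _ => by exact_mod_cast (hA.image (fi i)).card_pos) ?_
  calc log (A.image f).card = shannonEntropy (p.map f) := by
        rw [hpf, PMF.shannonEntropy_uniformOfFinset]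
    _ ≤ ∑ i, α i * shannonEntropy (p.map (fi i)) := hent p hpA
    _ ≤ ∑ i, α i * log (A.image (fi i)).card := sum_le_sum fun i _ =>
        mul_le_mul_of_nonneg_left (p.shannonEntropy_map_le_log_card_image (fi i) hpA) (hα i).le
end

section
/- Shearer's inequality: if 𝒮 is a uniform k-cover of [n], then for any random variable X = (X_1,...,X_n) taking values in B_1 × ⋯ × B_n, k·H(X) ≤ Σ_{S ∈ 𝒮} H(X_S), where X_S = (X_i : i ∈ S). -/
attribute [local instance] Classical.propDecidable

/-!
The marginal entropy `s ↦ H(X_s)` is submodular: `H(X_{s∪t}) + H(X_{s∩t}) ≤ H(X_s) + H(X_t)` is the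
nonnegativity of the conditional mutual information `I(X_{s∖t}; X_{t∖s} | X_{s∩t})`, which is Gibbs'
inequality against the product of the conditional marginals. For any submodular `f` with `f ∅ = 0`,
adding the coordinates of `S` one at a time in increasing order gives
`f S ≥ ∑_{i ∈ S} (f [0, i] - f [0, i))`; summing over a `k`-fold cover, every increment appears `k`
times and the increments telescope to `f [n]`.
-/

open Finset

section Entropy

open Real

variable {α β γ : Type*}

lemma negMulLog_add_mul_log_le {x y : ℝ} (hx : 0 ≤ x) (hy : 0 < y) :
    negMulLog x + x * log y ≤ y - x := by
  have hxy : negMulLog x = x / y * negMulLog y + y * negMulLog (x / y) := by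
    rw [← negMulLog_mul, mul_div_cancel₀ _ hy.ne']
  calc negMulLog x + x * log y = y * negMulLog (x / y) := by
        rw [hxy, negMulLog]
        field_simp
        ring
    _ ≤ y * (1 - x / y) := by gcongr; exact negMulLog_le_one_sub_self (by positivity)
    _ = y - x := by field_simp

lemma sum_negMulLog_add_negMulLog_sum_le [Fintype α] [Fintype β] (P : α → β → ℝ)
    (hP : ∀ a b, 0 ≤ P a b) :
    ∑ a, ∑ b, negMulLog (P a b) + negMulLog (∑ a, ∑ b, P a b) ≤
      ∑ a, negMulLog (∑ b, P a b) + ∑ b, negMulLog (∑ a, P a b) := by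
  set r : α → ℝ := fun a => ∑ b, P a b with hr
  set s : β → ℝ := fun b => ∑ a, P a b with hs
  set T := ∑ a, ∑ b, P a b with hT
  have hP_le_r : ∀ a b, P a b ≤ r a := fun a b =>
    single_le_sum (fun b _ => hP a b) (mem_univ b)
  have hP_le_s : ∀ a b, P a b ≤ s b := fun a b =>
    single_le_sum (fun a _ => hP a b) (mem_univ a)
  have hr_le_T : ∀ a, r a ≤ T := fun a =>
    single_le_sum (f := r) (fun a _ => sum_nonneg fun b _ => hP a b) (mem_univ a)
  -- Gibbs' inequality for `P` against the product of its marginals, `r a * s b / T`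
  have hpoint : ∀ a b, negMulLog (P a b) + (P a b * log (r a) + P a b * log (s b)
      - P a b * log T) ≤ r a * s b / T - P a b := by
    intro a b
    rcases (hP a b).eq_or_lt with hzero | hpos
    · have hr0 : 0 ≤ r a := (hP a b).trans (hP_le_r a b)
      have hs0 : 0 ≤ s b := (hP a b).trans (hP_le_s a b)
      rw [← hzero]
      simpa using div_nonneg (mul_nonneg hr0 hs0) (hr0.trans (hr_le_T a))
    · have hra := hpos.trans_le (hP_le_r a b)
      have hsb := hpos.trans_le (hP_le_s a b)
      have hTp := hra.trans_le (hr_le_T a)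
      rw [← mul_add, ← mul_sub, ← log_mul hra.ne' hsb.ne', ← log_div (by positivity) hTp.ne']
      exact negMulLog_add_mul_log_le hpos.le (by positivity)
  have hsum := sum_le_sum fun a (_ : a ∈ univ) => sum_le_sum fun b (_ : b ∈ univ) => hpoint a b
  have h_r : ∑ a, ∑ b, P a b * log (r a) = -∑ a, negMulLog (r a) := by
    simp only [← sum_mul, negMulLog, neg_mul, sum_neg_distrib, neg_neg, hr]
  have h_s : ∑ a, ∑ b, P a b * log (s b) = -∑ b, negMulLog (s b) := by
    rw [sum_comm]
    simp only [← sum_mul, negMulLog, neg_mul, sum_neg_distrib, neg_neg, hs]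
  have h_T : ∑ a, ∑ b, P a b * log T = -negMulLog T := by
    simp only [← sum_mul, negMulLog, neg_mul, neg_neg, hT]
  have h_prod : ∑ a, ∑ b, r a * s b / T = T := by
    have hsum_s : ∑ b, s b = T := sum_comm
    simp only [mul_div_assoc, ← mul_sum, ← sum_mul, ← sum_div, hsum_s]
    exact (mul_div_assoc T T T).symm.trans (mul_self_div_self T)
  simp only [sum_add_distrib, sum_sub_distrib, h_r, h_s, h_T, h_prod] at hsum
  linarith

lemma shannonEntropy_eq_sum [Fintype α] (q : PMF α) :
    shannonEntropy q = ∑ a, negMulLog (q a).toReal :=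
  tsum_fintype _

lemma shannonEntropy_of_subsingleton [Subsingleton α] (q : PMF α) : shannonEntropy q = 0 := by
  have hq : ∀ a, q a = 1 := fun a => by
    rw [← q.tsum_coe, tsum_eq_single a fun b hb => absurd (Subsingleton.elim b a) hb]
  simp [shannonEntropy, hq]

lemma shannonEntropy_map_of_injective (q : PMF α) {f : α → β} (hf : Function.Injective f) :
    shannonEntropy (q.map f) = shannonEntropy q := by
  have hmap : ∀ a, q.map f (f a) = q a := fun a => by
    rw [PMF.map_apply, tsum_eq_single a fun b hb => if_neg (hf.ne hb).symm, if_pos rfl]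
  unfold shannonEntropy
  rw [← hf.tsum_eq]
  · simp only [hmap]
  · intro b hb
    by_contra hrange
    have h0 : q.map f b = 0 := by
      rw [PMF.apply_eq_zero_iff, PMF.support_map]
      rintro ⟨a, -, rfl⟩
      exact hrange ⟨a, rfl⟩
    exact hb (by simp [h0])

/-- Conditional mutual information is nonnegative: `I(X; Y | Z) ≥ 0` for `(Z, X, Y) ∼ r`. -/
theorem shannonEntropy_add_shannonEntropy_map_fst_le [Fintype α] [Fintype β] [Fintype γ]
    (r : PMF (γ × α × β)) :
    shannonEntropy r + shannonEntropy (r.map Prod.fst) ≤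
      shannonEntropy (r.map fun w => (w.1, w.2.1)) +
        shannonEntropy (r.map fun w => (w.1, w.2.2)) := by
  have h_γ : ∀ c, r.map Prod.fst c = ∑ a, ∑ b, r (c, a, b) := fun c => by
    rw [PMF.map_apply, tsum_fintype, Fintype.sum_prod_type, sum_eq_single c]
    · simp [Fintype.sum_prod_type]
    · intro c' _ hc'; simp [Ne.symm hc']
    · simp
  have h_γα : ∀ c a, r.map (fun w => (w.1, w.2.1)) (c, a) = ∑ b, r (c, a, b) := fun c a => by
    rw [PMF.map_apply, tsum_fintype, Fintype.sum_prod_type, sum_eq_single c]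
    · rw [Fintype.sum_prod_type, sum_eq_single a]
      · simp
      · intro a' _ ha'; simp [Ne.symm ha']
      · simp
    · intro c' _ hc'; simp [Ne.symm hc']
    · simp
  have h_γβ : ∀ c b, r.map (fun w => (w.1, w.2.2)) (c, b) = ∑ a, r (c, a, b) := fun c b => by
    rw [PMF.map_apply, tsum_fintype, Fintype.sum_prod_type, sum_eq_single c]
    · rw [Fintype.sum_prod_type]
      refine sum_congr rfl fun a _ => ?_
      rw [sum_eq_single b]
      · simp
      · intro b' _ hb'; simp [Ne.symm hb']
      · simp
    · intro c' _ hc'; simp [Ne.symm hc']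
    · simp
  have hfin : ∀ w, r w ≠ ⊤ := r.apply_ne_top
  simp only [shannonEntropy_eq_sum, Fintype.sum_prod_type, h_γ, h_γα, h_γβ,
    ENNReal.toReal_sum fun _ _ => hfin _,
    ENNReal.toReal_sum fun _ _ => ENNReal.sum_ne_top.2 fun _ _ => hfin _, ← sum_add_distrib]
  exact sum_le_sum fun c _ =>
    sum_negMulLog_add_negMulLog_sum_le _ fun a b => ENNReal.toReal_nonneg

lemma shannonEntropy_map_graph (q : PMF α) (k : α → γ) :
    shannonEntropy (q.map fun a => (k a, a)) = shannonEntropy q :=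
  shannonEntropy_map_of_injective q fun _ _ h => congrArg Prod.snd h

theorem shannonEntropy_map_prodMk_add_le {Ω : Type*} [Fintype α] [Fintype β] [Fintype γ]
    (q : PMF Ω) (f : Ω → α) (g : Ω → β) (φ : α → γ) (ψ : β → γ) (hφψ : φ ∘ f = ψ ∘ g) :
    shannonEntropy (q.map fun x => (f x, g x)) + shannonEntropy (q.map (φ ∘ f)) ≤
      shannonEntropy (q.map f) + shannonEntropy (q.map g) := by
  set r := (q.map fun x => (f x, g x)).map fun y => (φ y.1, y)
  have h_γ : r.map Prod.fst = q.map (φ ∘ f) := by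
    simp only [r, PMF.map_comp]; rfl
  have h_γα : r.map (fun w => (w.1, w.2.1)) = (q.map f).map fun a => (φ a, a) := by
    simp only [r, PMF.map_comp]; rfl
  have h_γβ : r.map (fun w => (w.1, w.2.2)) = (q.map g).map fun b => (ψ b, b) := by
    simp only [r, PMF.map_comp]
    exact congrArg (PMF.map · q) (funext fun x => congrArg (·, g x) (congrFun hφψ x))
  have key := shannonEntropy_add_shannonEntropy_map_fst_le r
  rwa [h_γ, h_γα, h_γβ, shannonEntropy_map_graph, shannonEntropy_map_graph,
    shannonEntropy_map_graph] at key

end Entropy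

section Marginal

variable {ι : Type*} {B : ι → Type*}

noncomputable def marginalEntropy (p : PMF (∀ i, B i)) (s : Finset ι) : ℝ :=
  shannonEntropy (p.map s.restrict)

lemma marginalEntropy_empty (p : PMF (∀ i, B i)) : marginalEntropy p ∅ = 0 :=
  shannonEntropy_of_subsingleton _

lemma marginalEntropy_univ [Fintype ι] (p : PMF (∀ i, B i)) :
    marginalEntropy p univ = shannonEntropy p :=
  shannonEntropy_map_of_injective p fun _ _ h => funext fun i => congrFun h ⟨i, mem_univ i⟩

lemma marginalEntropy_union_add_inter_le [∀ i, Fintype (B i)] [DecidableEq ι]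
    (p : PMF (∀ i, B i)) (s t : Finset ι) :
    marginalEntropy p (s ∪ t) + marginalEntropy p (s ∩ t) ≤
      marginalEntropy p s + marginalEntropy p t := by
  have key := shannonEntropy_map_prodMk_add_le p s.restrict t.restrict
    (restrict₂ (π := B) inter_subset_left) (restrict₂ inter_subset_right)
    (by rw [restrict₂_comp_restrict, restrict₂_comp_restrict])
  rw [restrict₂_comp_restrict] at key
  have h_union : (fun x => (s.restrict x, t.restrict x)) =
      (fun y => (restrict₂ (π := B) subset_union_left y, restrict₂ subset_union_right y)) ∘
        (s ∪ t).restrict := rfl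
  rw [h_union, ← PMF.map_comp, shannonEntropy_map_of_injective] at key
  · exact key
  · intro y z h
    funext ⟨j, hj⟩
    rcases mem_union.1 hj with hs | ht
    · exact congrFun (congrArg Prod.fst h) ⟨j, hs⟩
    · exact congrFun (congrArg Prod.snd h) ⟨j, ht⟩

end Marginal

lemma Multiset.sum_map_ite_eq_countP_mul {σ R : Type*} [Semiring R] (m : Multiset σ)
    (P : σ → Prop) [DecidablePred P] (c : R) :
    (m.map fun s => if P s then c else 0).sum = m.countP P * c := by
  induction m using Multiset.induction_on with
  | empty => simp
  | cons a m ih => by_cases h : P a <;> simp [h, ih, add_mul, add_comm]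

section Shearer

variable {n : ℕ} (f : Finset (Fin n) → ℝ)

def initialSegment (n m : ℕ) : Finset (Fin n) := {j | (j : ℕ) < m}

lemma sum_sub_initialSegment_le (h_empty : f ∅ = 0)
    (h_sub : ∀ s t, f (s ∪ t) + f (s ∩ t) ≤ f s + f t) (s : Finset (Fin n)) :
    ∑ i ∈ s, (f (initialSegment n (i + 1)) - f (initialSegment n i)) ≤ f s := by
  induction s using Finset.induction_on_max with
  | empty => simp [h_empty]
  | insert a s h_lt ih =>
    have h_union : insert a s ∪ initialSegment n a = initialSegment n (a + 1) := by
      ext j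
      have := h_lt j
      simp only [initialSegment, mem_union, mem_insert, mem_filter, mem_univ, true_and,
        Fin.lt_def, Fin.ext_iff] at this ⊢
      grind
    have h_inter : insert a s ∩ initialSegment n a = s := by
      ext j
      have := h_lt j
      simp only [initialSegment, mem_inter, mem_insert, mem_filter, mem_univ, true_and,
        Fin.lt_def, Fin.ext_iff] at this ⊢
      grind
    have := h_sub (insert a s) (initialSegment n a)
    rw [h_union, h_inter] at this
    rw [sum_insert fun h => (h_lt a h).false]
    linarith

lemma sum_sub_initialSegment_univ :
    ∑ i : Fin n, (f (initialSegment n (i + 1)) - f (initialSegment n i)) = f univ - f ∅ := by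
  rw [Fin.sum_univ_eq_sum_range (fun m => f (initialSegment n (m + 1)) - f (initialSegment n m)),
    sum_range_sub (fun m => f (initialSegment n m))]
  congr <;> ext j <;> simp [initialSegment]

theorem mul_le_sum_map_of_submodular (h_empty : f ∅ = 0)
    (h_sub : ∀ s t, f (s ∪ t) + f (s ∩ t) ≤ f s + f t) {k : ℕ}
    (𝒮 : Multiset (Finset (Fin n))) (hcover : ∀ i : Fin n, 𝒮.countP (fun s => i ∈ s) = k) :
    (k : ℝ) * f univ ≤ (𝒮.map f).sum := by
  set Δ : Fin n → ℝ := fun i => f (initialSegment n (i + 1)) - f (initialSegment n i)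
  have h_count : ∀ i, (𝒮.map fun s => if i ∈ s then Δ i else 0).sum = k * Δ i := fun i => by
    rw [Multiset.sum_map_ite_eq_countP_mul, hcover]
  calc (k : ℝ) * f univ = ∑ i, k * Δ i := by
        rw [← mul_sum, sum_sub_initialSegment_univ, h_empty, sub_zero]
    _ = (𝒮.map fun s => ∑ i ∈ s, Δ i).sum := by
        simp only [← h_count, ← Multiset.sum_map_sum, ← sum_filter, filter_mem_eq_inter, univ_inter]
    _ ≤ (𝒮.map f).sum :=
        Multiset.sum_map_le_sum_map _ _ fun s _ => sum_sub_initialSegment_le f h_empty h_sub s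

end Shearer

theorem stmt10_general {n k : ℕ} (B : Fin n → Type*) [∀ i, Fintype (B i)]
    (𝒮 : Multiset (Finset (Fin n)))
    (hcover : ∀ i : Fin n, 𝒮.countP (fun s => i ∈ s) = k)
    (p : PMF (∀ i, B i)) :
    (k : ℝ) * shannonEntropy p ≤
      (𝒮.map fun s =>
        shannonEntropy (p.map fun x (j : {j : Fin n // j ∈ s}) => x j.1)).sum := by
  rw [← marginalEntropy_univ p]
  exact mul_le_sum_map_of_submodular (marginalEntropy p) (marginalEntropy_empty p)
    (marginalEntropy_union_add_inter_le p) 𝒮 hcover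

/-- Shearer's inequality: if each `i ∈ [n]` lies in exactly `k` members of
the multiset `𝒮`, then `k·H(X) ≤ ∑_{S ∈ 𝒮} H(X_S)` for any random variable
`X = (X_1, …, X_n)` with values in `B 1 × ⋯ × B n`. -/
theorem stmt10 {n k : ℕ} (hn : 2 ≤ n) (B : Fin n → Type*) [∀ i, Fintype (B i)]
    (𝒮 : Multiset (Finset (Fin n)))
    (hcover : ∀ i : Fin n, 𝒮.countP (fun s => i ∈ s) = k)
    (p : PMF (∀ i, B i)) :
    (k : ℝ) * shannonEntropy p ≤
      (𝒮.map fun s =>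
        shannonEntropy (p.map fun x (j : {j : Fin n // j ∈ s}) => x j.1)).sum :=
  stmt10_general B 𝒮 hcover p
end

section
/- Madiman–Tetali fractional-cover entropy inequality: for any fractional covering α of a multiset 𝒮 of subsets of [n] and any random variable X = (X_1,...,X_n) with finite entropy taking values in B_1 × ⋯ × B_n, H(X) ≤ Σ_{S∈𝒮} α_S · H(X_S | X_{S_*}), where S_* = [min(S) − 1] (the empty set if min(S) = 1). -/
attribute [local instance] Classical.propDecidable

/-- For a nonempty `s ⊆ [n]` with minimal element `a`, `sStar s = {1, …, a − 1}`,
i.e. the set of indices smaller than every element of `s`. -/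
def sStar {n : ℕ} (s : Finset (Fin n)) : Finset (Fin n) :=
  Finset.univ.filter fun j => ∀ i ∈ s, j < i

namespace MTaux

open Finset Real

set_option linter.unusedSectionVars false

variable {n : ℕ} {B : Fin n → Type*} [∀ i, Fintype (B i)]

noncomputable def pr (p : PMF (∀ i, B i)) (x : ∀ i, B i) : ℝ := (p x).toReal

noncomputable def mg (p : PMF (∀ i, B i)) (s : Finset (Fin n)) (x : ∀ i, B i) : ℝ :=
  ∑ y : ∀ i, B i, if ∀ i ∈ s, y i = x i then pr p y else 0

noncomputable def Hm (p : PMF (∀ i, B i)) (s : Finset (Fin n)) : ℝ :=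
  ∑ x : ∀ i, B i, pr p x * (-Real.log (mg p s x))

variable (p : PMF (∀ i, B i))

lemma pr_nonneg (x : ∀ i, B i) : 0 ≤ pr p x := ENNReal.toReal_nonneg

lemma sum_pr : ∑ x : ∀ i, B i, pr p x = 1 := by
  have h := p.tsum_coe
  rw [tsum_fintype] at h
  have : ∑ x : ∀ i, B i, pr p x = (∑ x : ∀ i, B i, p x).toReal := by
    rw [ENNReal.toReal_sum]
    · rfl
    · exact fun a _ => p.apply_ne_top a
  rw [this, h, ENNReal.toReal_one]

lemma mg_nonneg (s : Finset (Fin n)) (x : ∀ i, B i) : 0 ≤ mg p s x := by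
  refine Finset.sum_nonneg fun y _ => ?_
  split_ifs
  · exact pr_nonneg p y
  · exact le_refl 0

lemma pr_le_mg (s : Finset (Fin n)) (x : ∀ i, B i) : pr p x ≤ mg p s x := by
  have hx : (if ∀ i ∈ s, x i = x i then pr p x else 0) = pr p x := by
    rw [if_pos fun i _ => rfl]
  calc pr p x = (if ∀ i ∈ s, x i = x i then pr p x else 0) := hx.symm
    _ ≤ mg p s x := by
        refine Finset.single_le_sum (f := fun y => if ∀ i ∈ s, y i = x i then pr p y else 0)
          (fun y _ => ?_) (Finset.mem_univ x)
        split_ifs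
        · exact pr_nonneg p y
        · exact le_refl 0

lemma mg_le_one (s : Finset (Fin n)) (x : ∀ i, B i) : mg p s x ≤ 1 := by
  rw [← sum_pr p]
  refine Finset.sum_le_sum fun y _ => ?_
  split_ifs
  · exact le_refl _
  · exact pr_nonneg p y

lemma mg_mono {s t : Finset (Fin n)} (hst : s ⊆ t) (x : ∀ i, B i) :
    mg p t x ≤ mg p s x := by
  refine Finset.sum_le_sum fun y _ => ?_
  by_cases h : ∀ i ∈ t, y i = x i
  · rw [if_pos h, if_pos fun i hi => h i (hst hi)]
  · rw [if_neg h]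
    split_ifs
    · exact pr_nonneg p y
    · exact le_refl 0

lemma mg_congr {s : Finset (Fin n)} {x x' : ∀ i, B i} (h : ∀ i ∈ s, x i = x' i) :
    mg p s x = mg p s x' := by
  refine Finset.sum_congr rfl fun y _ => ?_
  have : (∀ i ∈ s, y i = x i) ↔ (∀ i ∈ s, y i = x' i) := by
    constructor
    · exact fun hy i hi => (hy i hi).trans (h i hi)
    · exact fun hy i hi => (hy i hi).trans (h i hi).symm
  simp only [this]

lemma mg_empty (x : ∀ i, B i) : mg p ∅ x = 1 := by
  unfold mg
  have : ∀ y : ∀ i, B i, (if ∀ i ∈ (∅ : Finset (Fin n)), y i = x i then pr p y else 0) = pr p y := by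
    intro y
    rw [if_pos fun i hi => absurd hi (Finset.notMem_empty i)]
  rw [Finset.sum_congr rfl fun y _ => this y, sum_pr]

lemma mg_univ (x : ∀ i, B i) : mg p Finset.univ x = pr p x := by
  unfold mg
  have : ∀ y : ∀ i, B i, (if ∀ i ∈ (Finset.univ : Finset (Fin n)), y i = x i then pr p y else 0)
      = if y = x then pr p y else 0 := by
    intro y
    congr 1
    simp [funext_iff]
  rw [Finset.sum_congr rfl fun y _ => this y, Finset.sum_ite_eq' Finset.univ x]
  simp

lemma pr_pos_of {x : ∀ i, B i} (h : pr p x ≠ 0) : 0 < pr p x :=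
  lt_of_le_of_ne (pr_nonneg p x) (Ne.symm h)

lemma mg_pos {s : Finset (Fin n)} {x : ∀ i, B i} (h : pr p x ≠ 0) : 0 < mg p s x :=
  lt_of_lt_of_le (pr_pos_of p h) (pr_le_mg p s x)

lemma Hm_mono {s t : Finset (Fin n)} (hst : s ⊆ t) : Hm p s ≤ Hm p t := by
  refine Finset.sum_le_sum fun x _ => ?_
  by_cases h : pr p x = 0
  · rw [h, zero_mul, zero_mul]
  · refine mul_le_mul_of_nonneg_left ?_ (pr_nonneg p x)
    rw [neg_le_neg_iff]
    exact Real.log_le_log (mg_pos p h) (mg_mono p hst x)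

lemma Hm_empty : Hm p ∅ = 0 := by
  unfold Hm
  refine Finset.sum_eq_zero fun x _ => ?_
  rw [mg_empty, Real.log_one, neg_zero, mul_zero]

lemma Hm_nonneg (s : Finset (Fin n)) : 0 ≤ Hm p s := by
  rw [← Hm_empty p]
  exact Hm_mono p (Finset.empty_subset s)


/-- number of free coordinates -/
def Nc (B : Fin n → Type*) [∀ i, Fintype (B i)] (s : Finset (Fin n)) : ℕ :=
  ∏ i ∈ sᶜ, Fintype.card (B i)

lemma count_fiber (s : Finset (Fin n)) (w : ∀ i, B i) :
    (Finset.univ.filter fun x : ∀ i, B i => ∀ i ∈ s, x i = w i).card = Nc B s := by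
  classical
  rw [← Fintype.card_subtype]
  have e : {x : ∀ i, B i // ∀ i ∈ s, x i = w i} ≃ (∀ j : {j : Fin n // j ∉ s}, B j.1) :=
    { toFun := fun x j => x.1 j.1
      invFun := fun g => ⟨fun i => if h : i ∈ s then w i else g ⟨i, h⟩, by
        intro i hi; simp [hi]⟩
      left_inv := by
        intro x
        ext i
        by_cases h : i ∈ s
        · simp [h, (x.2 i h).symm]
        · simp [h]
      right_inv := by
        intro g
        funext j
        simp [j.2] }
  rw [Fintype.card_congr e, Fintype.card_pi]
  unfold Nc
  rw [Finset.prod_subtype sᶜ (fun x => Finset.mem_compl) (fun i => Fintype.card (B i))]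

lemma count_fiber2 (A C : Finset (Fin n)) (y z : ∀ i, B i) :
    (Finset.univ.filter fun x : ∀ i, B i =>
        (∀ i ∈ A, x i = y i) ∧ (∀ i ∈ C, x i = z i)).card
      = if ∀ i ∈ A ∩ C, y i = z i then Nc B (A ∪ C) else 0 := by
  classical
  split_ifs with hyz
  · set w : ∀ i, B i := fun i => if i ∈ A then y i else z i with hw
    have : ∀ x : ∀ i, B i,
        ((∀ i ∈ A, x i = y i) ∧ (∀ i ∈ C, x i = z i)) ↔ (∀ i ∈ A ∪ C, x i = w i) := by
      intro x
      constructor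
      · rintro ⟨h1, h2⟩ i hi
        by_cases hiA : i ∈ A
        · simp only [hw, if_pos hiA]; exact h1 i hiA
        · have hiC : i ∈ C := by
            rcases Finset.mem_union.1 hi with h | h
            · exact absurd h hiA
            · exact h
          simp only [hw, if_neg hiA]; exact h2 i hiC
      · intro h
        constructor
        · intro i hi
          have := h i (Finset.mem_union_left _ hi)
          simpa only [hw, if_pos hi] using this
        · intro i hi
          have := h i (Finset.mem_union_right _ hi)
          by_cases hiA : i ∈ A
          · rw [this, hw]
            simp only [if_pos hiA]
            exact (hyz i (Finset.mem_inter.2 ⟨hiA, hi⟩)).symm ▸ rfl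
          · simpa only [hw, if_neg hiA] using this
    simp only [this]
    exact count_fiber (A ∪ C) w
  · rw [Finset.card_eq_zero, Finset.filter_eq_empty_iff]
    intro x _
    rintro ⟨h1, h2⟩
    apply hyz
    intro i hi
    rw [← h1 i (Finset.mem_inter.1 hi).1, h2 i (Finset.mem_inter.1 hi).2]

lemma grp {s : Finset (Fin n)} {g : (∀ i, B i) → ℝ}
    (hg : ∀ x x' : ∀ i, B i, (∀ i ∈ s, x i = x' i) → g x = g x') :
    ∑ x : ∀ i, B i, mg p s x * g x = (Nc B s : ℝ) * ∑ x : ∀ i, B i, pr p x * g x := by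
  classical
  unfold mg
  calc ∑ x : ∀ i, B i, (∑ y : ∀ i, B i, if ∀ i ∈ s, y i = x i then pr p y else 0) * g x
      = ∑ x : ∀ i, B i, ∑ y : ∀ i, B i, (if ∀ i ∈ s, y i = x i then pr p y * g x else 0) := by
        refine Finset.sum_congr rfl fun x _ => ?_
        rw [Finset.sum_mul]
        refine Finset.sum_congr rfl fun y _ => ?_
        rw [ite_mul, zero_mul]
    _ = ∑ y : ∀ i, B i, ∑ x : ∀ i, B i, (if ∀ i ∈ s, y i = x i then pr p y * g x else 0) :=
        Finset.sum_comm
    _ = ∑ y : ∀ i, B i, ∑ x : ∀ i, B i, (if ∀ i ∈ s, x i = y i then pr p y * g y else 0) := by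
        refine Finset.sum_congr rfl fun y _ => Finset.sum_congr rfl fun x _ => ?_
        have hiff : (∀ i ∈ s, y i = x i) ↔ (∀ i ∈ s, x i = y i) :=
          ⟨fun h i hi => (h i hi).symm, fun h i hi => (h i hi).symm⟩
        by_cases h : ∀ i ∈ s, x i = y i
        · rw [if_pos (hiff.2 h), if_pos h, hg x y h]
        · rw [if_neg (fun hc => h (hiff.1 hc)), if_neg h]
    _ = ∑ y : ∀ i, B i, (Nc B s : ℝ) * (pr p y * g y) := by
        refine Finset.sum_congr rfl fun y _ => ?_
        rw [← Finset.sum_filter, Finset.sum_const, count_fiber s y, nsmul_eq_mul]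
    _ = (Nc B s : ℝ) * ∑ x : ∀ i, B i, pr p x * g x := by rw [← Finset.mul_sum]


lemma nonempty_B (p : PMF (∀ i, B i)) (i : Fin n) : Nonempty (B i) := by
  have h1 : ∑ x : ∀ i, B i, pr p x = 1 := sum_pr p
  by_contra h
  have : IsEmpty (∀ i, B i) := ⟨fun x => h ⟨x i⟩⟩
  rw [Finset.univ_eq_empty, Finset.sum_empty] at h1
  exact zero_ne_one h1

lemma nc_pos (p : PMF (∀ i, B i)) (s : Finset (Fin n)) : 0 < Nc B s := by
  refine Finset.prod_pos fun i _ => ?_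
  have := nonempty_B p i
  exact Fintype.card_pos

lemma submod (A C : Finset (Fin n)) :
    Hm p (A ∪ C) + Hm p (A ∩ C) ≤ Hm p A + Hm p C := by
  classical
  set N : ℝ := (Nc B (A ∪ C) : ℝ) with hN
  have hNpos : 0 < N := by
    rw [hN]
    exact_mod_cast nc_pos p (A ∪ C)
  set R : (∀ i, B i) → ℝ :=
    fun x => mg p A x * mg p C x / (mg p (A ∩ C) x * mg p (A ∪ C) x) with hR
  -- measurability of R w.r.t. A ∪ C
  have hRmeas : ∀ x x' : ∀ i, B i, (∀ i ∈ A ∪ C, x i = x' i) → R x = R x' := by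
    intro x x' h
    have hA : mg p A x = mg p A x' :=
      mg_congr p fun i hi => h i (Finset.mem_union_left _ hi)
    have hC : mg p C x = mg p C x' :=
      mg_congr p fun i hi => h i (Finset.mem_union_right _ hi)
    have hI : mg p (A ∩ C) x = mg p (A ∩ C) x' :=
      mg_congr p fun i hi => h i (Finset.mem_union_left _ (Finset.mem_inter.1 hi).1)
    have hU : mg p (A ∪ C) x = mg p (A ∪ C) x' := mg_congr p h
    rw [hR]
    simp only [hA, hC, hI, hU]
  -- Step 2': N * T = ∑ m∪ * R
  have hgrp := grp p (s := A ∪ C) (g := R) hRmeas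
  -- pointwise : m∪ x * R x ≤ mA x * mC x / m∩ x
  have hpt : ∀ x : ∀ i, B i,
      mg p (A ∪ C) x * R x ≤ mg p A x * mg p C x / mg p (A ∩ C) x := by
    intro x
    by_cases h : mg p (A ∪ C) x = 0
    · rw [h, zero_mul]
      exact div_nonneg (mul_nonneg (mg_nonneg p A x) (mg_nonneg p C x)) (mg_nonneg p (A ∩ C) x)
    · have hI : mg p (A ∩ C) x ≠ 0 := by
        intro h0
        exact h (le_antisymm (h0 ▸ mg_mono p (Finset.inter_subset_union) x)
          (mg_nonneg p (A ∪ C) x))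
      rw [hR]
      refine le_of_eq ?_
      field_simp
  -- Claim 3 : T₂ ≤ N
  have hT2 : ∑ x : ∀ i, B i, mg p A x * mg p C x / mg p (A ∩ C) x ≤ N := by
    have step_a : ∀ x : ∀ i, B i, mg p A x * mg p C x / mg p (A ∩ C) x
        = ∑ y : ∀ i, B i, ∑ z : ∀ i, B i,
            (if (∀ i ∈ A, y i = x i) ∧ (∀ i ∈ C, z i = x i)
              then pr p y * pr p z / mg p (A ∩ C) y else 0) := by
      intro x
      have hAdef : mg p A x = ∑ y : ∀ i, B i, if ∀ i ∈ A, y i = x i then pr p y else 0 := rfl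
      have hCdef : mg p C x = ∑ z : ∀ i, B i, if ∀ i ∈ C, z i = x i then pr p z else 0 := rfl
      rw [hAdef, hCdef, Finset.sum_mul_sum, Finset.sum_div]
      refine Finset.sum_congr rfl fun y _ => ?_
      rw [Finset.sum_div]
      refine Finset.sum_congr rfl fun z _ => ?_
      by_cases hy : ∀ i ∈ A, y i = x i
      · by_cases hz : ∀ i ∈ C, z i = x i
        · rw [if_pos hy, if_pos hz, if_pos ⟨hy, hz⟩]
          have : mg p (A ∩ C) x = mg p (A ∩ C) y :=
            mg_congr p fun i hi => (hy i (Finset.mem_inter.1 hi).1).symm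
          rw [this]
        · rw [if_neg hz,
            if_neg (show ¬((∀ i ∈ A, y i = x i) ∧ ∀ i ∈ C, z i = x i) from fun hc => hz hc.2),
            mul_zero, zero_div]
      · rw [if_neg hy,
          if_neg (show ¬((∀ i ∈ A, y i = x i) ∧ ∀ i ∈ C, z i = x i) from fun hc => hy hc.1),
          zero_mul, zero_div]
    have step_c : ∀ y z : ∀ i, B i,
        (∑ x : ∀ i, B i, if (∀ i ∈ A, y i = x i) ∧ (∀ i ∈ C, z i = x i)
            then pr p y * pr p z / mg p (A ∩ C) y else 0)
          = if ∀ i ∈ A ∩ C, y i = z i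
              then N * (pr p y * pr p z / mg p (A ∩ C) y) else 0 := by
      intro y z
      rw [← Finset.sum_filter]
      have hfil : (Finset.univ.filter fun x : ∀ i, B i =>
            (∀ i ∈ A, y i = x i) ∧ (∀ i ∈ C, z i = x i))
          = Finset.univ.filter fun x : ∀ i, B i =>
            (∀ i ∈ A, x i = y i) ∧ (∀ i ∈ C, x i = z i) := by
        refine Finset.filter_congr fun x _ => ?_
        constructor
        · rintro ⟨h1, h2⟩
          exact ⟨fun i hi => (h1 i hi).symm, fun i hi => (h2 i hi).symm⟩
        · rintro ⟨h1, h2⟩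
          exact ⟨fun i hi => (h1 i hi).symm, fun i hi => (h2 i hi).symm⟩
      rw [Finset.sum_const, hfil, count_fiber2 A C y z]
      split_ifs with hyz
      · rw [nsmul_eq_mul, hN]
      · rw [zero_smul]
    calc ∑ x : ∀ i, B i, mg p A x * mg p C x / mg p (A ∩ C) x
        = ∑ x : ∀ i, B i, ∑ y : ∀ i, B i, ∑ z : ∀ i, B i,
            (if (∀ i ∈ A, y i = x i) ∧ (∀ i ∈ C, z i = x i)
              then pr p y * pr p z / mg p (A ∩ C) y else 0) :=
          Finset.sum_congr rfl fun x _ => step_a x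
      _ = ∑ y : ∀ i, B i, ∑ z : ∀ i, B i, ∑ x : ∀ i, B i,
            (if (∀ i ∈ A, y i = x i) ∧ (∀ i ∈ C, z i = x i)
              then pr p y * pr p z / mg p (A ∩ C) y else 0) := by
          rw [Finset.sum_comm]
          exact Finset.sum_congr rfl fun y _ => Finset.sum_comm
      _ = ∑ y : ∀ i, B i, ∑ z : ∀ i, B i,
            (if ∀ i ∈ A ∩ C, y i = z i
              then N * (pr p y * pr p z / mg p (A ∩ C) y) else 0) :=
          Finset.sum_congr rfl fun y _ => Finset.sum_congr rfl fun z _ => step_c y z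
      _ = ∑ y : ∀ i, B i, (N * pr p y / mg p (A ∩ C) y) * mg p (A ∩ C) y := by
          refine Finset.sum_congr rfl fun y _ => ?_
          have hmdef : mg p (A ∩ C) y
              = ∑ z : ∀ i, B i, if ∀ i ∈ A ∩ C, z i = y i then pr p z else 0 := rfl
          calc (∑ z : ∀ i, B i,
                if ∀ i ∈ A ∩ C, y i = z i then N * (pr p y * pr p z / mg p (A ∩ C) y) else 0)
              = ∑ z : ∀ i, B i, (N * pr p y / mg p (A ∩ C) y)
                  * (if ∀ i ∈ A ∩ C, z i = y i then pr p z else 0) := by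
                refine Finset.sum_congr rfl fun z _ => ?_
                by_cases hc : ∀ i ∈ A ∩ C, z i = y i
                · rw [if_pos (fun i hi => (hc i hi).symm : ∀ i ∈ A ∩ C, y i = z i), if_pos hc]
                  ring
                · rw [if_neg (fun hc' => hc fun i hi => (hc' i hi).symm), if_neg hc, mul_zero]
            _ = (N * pr p y / mg p (A ∩ C) y) * mg p (A ∩ C) y := by
                rw [← Finset.mul_sum, ← hmdef]
      _ ≤ ∑ y : ∀ i, B i, N * pr p y := by
          refine Finset.sum_le_sum fun y _ => ?_
          by_cases hm : mg p (A ∩ C) y = 0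
          · rw [hm, mul_zero]
            exact mul_nonneg (le_of_lt hNpos) (pr_nonneg p y)
          · rw [div_mul_cancel₀ _ hm]
      _ = N := by rw [← Finset.mul_sum, sum_pr, mul_one]
  -- T ≤ 1
  have hptsum : ∑ x : ∀ i, B i, mg p (A ∪ C) x * R x
      ≤ ∑ x : ∀ i, B i, mg p A x * mg p C x / mg p (A ∩ C) x :=
    Finset.sum_le_sum fun x _ => hpt x
  have hT1 : ∑ x : ∀ i, B i, pr p x * R x ≤ 1 := by
    have h1 : N * (∑ x : ∀ i, B i, pr p x * R x) ≤ N * 1 := by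
      rw [mul_one, ← hN] at *
      rw [← hgrp] at *
      exact le_trans hptsum hT2
    exact le_of_mul_le_mul_left h1 hNpos
  -- pointwise log bound
  have hlog : ∀ x : ∀ i, B i,
      pr p x * (-Real.log (mg p (A ∪ C) x)) + pr p x * (-Real.log (mg p (A ∩ C) x))
        ≤ pr p x * (-Real.log (mg p A x)) + pr p x * (-Real.log (mg p C x))
          + (pr p x * R x - pr p x) := by
    intro x
    by_cases h : pr p x = 0
    · rw [h]; simp
    · have h1 : 0 < mg p A x := mg_pos p h
      have h2 : 0 < mg p C x := mg_pos p h
      have h3 : 0 < mg p (A ∩ C) x := mg_pos p h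
      have h4 : 0 < mg p (A ∪ C) x := mg_pos p h
      have hRx : 0 < R x := by
        rw [hR]
        exact div_pos (mul_pos h1 h2) (mul_pos h3 h4)
      have hlog1 : Real.log (R x) ≤ R x - 1 := Real.log_le_sub_one_of_pos hRx
      have hlogR : Real.log (R x)
          = Real.log (mg p A x) + Real.log (mg p C x)
            - (Real.log (mg p (A ∩ C) x) + Real.log (mg p (A ∪ C) x)) := by
        rw [hR]
        simp only []
        rw [Real.log_div (ne_of_gt (mul_pos h1 h2)) (ne_of_gt (mul_pos h3 h4)),
          Real.log_mul h1.ne' h2.ne', Real.log_mul h3.ne' h4.ne']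
      rw [hlogR] at hlog1
      have hmul := mul_le_mul_of_nonneg_left hlog1 (pr_nonneg p x)
      nlinarith [hmul]
  -- sum up
  have hsum : Hm p (A ∪ C) + Hm p (A ∩ C)
      ≤ Hm p A + Hm p C + ((∑ x : ∀ i, B i, pr p x * R x) - 1) := by
    unfold Hm
    rw [← Finset.sum_add_distrib]
    conv_rhs => rw [← sum_pr p]
    rw [← Finset.sum_sub_distrib, ← Finset.sum_add_distrib, ← Finset.sum_add_distrib]
    exact Finset.sum_le_sum fun x _ => hlog x
  linarith




lemma shannon_fin {α : Type*} [Fintype α] (q : PMF α) :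
    shannonEntropy q = ∑ a : α, Real.negMulLog ((q a).toReal) := by
  unfold shannonEntropy
  exact tsum_fintype _

lemma negMulLog_eq (x : ℝ) : Real.negMulLog x = x * (-Real.log x) := by
  rw [Real.negMulLog]; ring

lemma shannon_map (s : Finset (Fin n)) :
    shannonEntropy (p.map fun x (j : {j : Fin n // j ∈ s}) => x j.1) = Hm p s := by
  classical
  set f : (∀ i, B i) → (∀ j : {j : Fin n // j ∈ s}, B j.1) :=
    fun x j => x j.1 with hf
  have happ : ∀ b, ((p.map f) b).toReal = ∑ a : ∀ i, B i, if b = f a then pr p a else 0 := by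
    intro b
    rw [PMF.map_apply, tsum_fintype, ENNReal.toReal_sum (fun a _ => ?_)]
    · refine Finset.sum_congr rfl fun a _ => ?_
      rw [apply_ite ENNReal.toReal, ENNReal.toReal_zero]
      by_cases h : b = f a <;> simp [h, pr]
    · split_ifs
      · exact p.apply_ne_top a
      · exact ENNReal.zero_ne_top
  have hfib : ∀ a : ∀ i, B i,
      (∑ y : ∀ i, B i, if f a = f y then pr p y else 0) = mg p s a := by
    intro a
    refine Finset.sum_congr rfl fun y _ => ?_
    have : (f a = f y) ↔ (∀ i ∈ s, y i = a i) := by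
      rw [funext_iff]
      constructor
      · intro h i hi
        exact (h ⟨i, hi⟩).symm
      · intro h j
        exact (h j.1 j.2).symm
    simp only [this]
  rw [shannon_fin]
  calc ∑ b, Real.negMulLog (((p.map f) b).toReal)
      = ∑ b, (∑ a : ∀ i, B i, if b = f a then pr p a else 0)
          * (-Real.log (((p.map f) b).toReal)) := by
        refine Finset.sum_congr rfl fun b _ => ?_
        rw [negMulLog_eq, happ]
    _ = ∑ b, ∑ a : ∀ i, B i,
          (if b = f a then pr p a * (-Real.log (((p.map f) b).toReal)) else 0) := by
        refine Finset.sum_congr rfl fun b _ => ?_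
        rw [Finset.sum_mul]
        exact Finset.sum_congr rfl fun a _ => by rw [ite_mul, zero_mul]
    _ = ∑ a : ∀ i, B i, ∑ b,
          (if b = f a then pr p a * (-Real.log (((p.map f) b).toReal)) else 0) :=
        Finset.sum_comm
    _ = ∑ a : ∀ i, B i, pr p a * (-Real.log (((p.map f) (f a)).toReal)) := by
        refine Finset.sum_congr rfl fun a _ => ?_
        rw [Finset.sum_ite_eq' Finset.univ (f a)
          (fun b => pr p a * (-Real.log (((p.map f) b).toReal)))]
        simp
    _ = ∑ a : ∀ i, B i, pr p a * (-Real.log (mg p s a)) := by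
        refine Finset.sum_congr rfl fun a _ => ?_
        rw [happ, hfib]
    _ = Hm p s := rfl

lemma shannon_univ : shannonEntropy p = Hm p Finset.univ := by
  rw [shannon_fin]
  refine Finset.sum_congr rfl fun x _ => ?_
  rw [mg_univ, negMulLog_eq]
  rfl


def Kp (n : ℕ) (k : ℕ) : Finset (Fin n) :=
  Finset.univ.filter fun j => (j : ℕ) < k

lemma Kp_zero : Kp n 0 = ∅ := by
  ext j; simp [Kp]

lemma Kp_top : Kp n n = Finset.univ := by
  ext j; simp [Kp, j.isLt]

lemma Kp_succ {k : ℕ} (hk : k < n) : Kp n (k + 1) = Kp n k ∪ {(⟨k, hk⟩ : Fin n)} := by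
  ext j
  simp only [Kp, Finset.mem_filter, Finset.mem_univ, true_and, Finset.mem_union,
    Finset.mem_singleton, Fin.ext_iff]
  omega

lemma Kp_subset_succ (k : ℕ) : Kp n k ⊆ Kp n (k + 1) := by
  intro j
  simp only [Kp, Finset.mem_filter, Finset.mem_univ, true_and]
  omega

lemma chain : Hm p Finset.univ = ∑ k ∈ Finset.range n, (Hm p (Kp n (k+1)) - Hm p (Kp n k)) := by
  rw [Finset.sum_range_sub (fun k => Hm p (Kp n k)), Kp_zero, Kp_top, Hm_empty, sub_zero]

lemma perS (s : Finset (Fin n)) :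
    (∑ k ∈ Finset.range n, if h : k < n then
        (if (⟨k, h⟩ : Fin n) ∈ s then Hm p (Kp n (k+1)) - Hm p (Kp n k) else 0) else 0)
      ≤ Hm p (s ∪ sStar s) - Hm p (sStar s) := by
  classical
  set J : ℕ → Finset (Fin n) := fun k => sStar s ∪ s.filter (fun j => (j : ℕ) < k) with hJ
  have hJ0 : J 0 = sStar s := by
    simp [hJ]
  have hJn : J n = s ∪ sStar s := by
    rw [hJ]
    simp only []
    rw [Finset.filter_true_of_mem (fun j _ => j.isLt), Finset.union_comm]
  have htel : Hm p (s ∪ sStar s) - Hm p (sStar s)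
      = ∑ k ∈ Finset.range n, (Hm p (J (k+1)) - Hm p (J k)) := by
    rw [Finset.sum_range_sub (fun k => Hm p (J k)), hJ0, hJn]
  rw [htel]
  refine Finset.sum_le_sum fun k hk => ?_
  have hkn : k < n := Finset.mem_range.1 hk
  rw [dif_pos hkn]
  set i : Fin n := ⟨k, hkn⟩ with hi
  by_cases his : i ∈ s
  · rw [if_pos his]
    have hJk1 : J (k+1) = J k ∪ {i} := by
      rw [hJ]
      simp only []
      ext j
      simp only [Finset.mem_union, Finset.mem_filter, Finset.mem_singleton]
      constructor
      · rintro (h | ⟨hjs, hjk⟩)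
        · exact Or.inl (Or.inl h)
        · rcases Nat.lt_succ_iff_lt_or_eq.1 hjk with h' | h'
          · exact Or.inl (Or.inr ⟨hjs, h'⟩)
          · exact Or.inr (Fin.ext (show (j:ℕ) = (i:ℕ) from h'))
      · rintro ((h | ⟨hjs, hjk⟩) | h)
        · exact Or.inl h
        · exact Or.inr ⟨hjs, Nat.lt_succ_of_lt hjk⟩
        · rw [h]
          exact Or.inr ⟨his, Nat.lt_succ_self k⟩
    have hsub : J k ⊆ Kp n k := by
      intro j hj
      simp only [Kp, Finset.mem_filter, Finset.mem_univ, true_and]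
      rcases Finset.mem_union.1 hj with h | h
      · have : j < i := by
          have := Finset.mem_filter.1 (by simpa [sStar] using h : j ∈ Finset.univ.filter
            fun j : Fin n => ∀ i' ∈ s, j < i')
          exact this.2 i his
        exact this
      · exact (Finset.mem_filter.1 h).2
    have hiK : i ∉ Kp n k := by
      simp [Kp, hi]
    have hsm := submod p (Kp n k) (J k ∪ {i})
    have hU : Kp n k ∪ (J k ∪ {i}) = Kp n (k+1) := by
      rw [Kp_succ hkn, ← Finset.union_assoc, Finset.union_eq_left.2 hsub]
    have hI : Kp n k ∩ (J k ∪ {i}) = J k := by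
      rw [Finset.inter_union_distrib_left, Finset.inter_eq_right.2 hsub,
        Finset.inter_singleton_of_notMem hiK, Finset.union_empty]
    rw [hU, hI, ← hJk1] at hsm
    linarith
  · rw [if_neg his]
    have : J (k+1) = J k := by
      rw [hJ]
      simp only []
      congr 1
      refine Finset.filter_congr fun j hj => ?_
      constructor
      · intro h
        rcases Nat.lt_succ_iff_lt_or_eq.1 h with h' | h'
        · exact h'
        · exact absurd ((Fin.ext (show (j:ℕ) = (i:ℕ) from h') : j = i) ▸ hj : i ∈ s) his
      · exact fun h => Nat.lt_succ_of_lt h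
    rw [this, sub_self]

lemma sum_map_swap {ι β : Type*} (m : Multiset β) (t : Finset ι) (f : β → ι → ℝ) :
    (m.map fun a => ∑ k ∈ t, f a k).sum = ∑ k ∈ t, (m.map fun a => f a k).sum := by
  induction m using Multiset.induction_on with
  | empty => simp
  | cons a m ih => simp [ih, Finset.sum_add_distrib]

end MTaux

/-- Madiman–Tetali fractional-cover entropy inequality:
`H(X) ≤ ∑_{S ∈ 𝒮} α S * H(X_S | X_{S_*})`, where the conditional entropy is
`H(X_{S ∪ S_*}) − H(X_{S_*})`. -/
theorem stmt12 {n : ℕ} (hn : 2 ≤ n) (B : Fin n → Type*) [∀ i, Fintype (B i)]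
    (𝒮 : Multiset (Finset (Fin n))) (hne : ∀ s ∈ 𝒮, s.Nonempty)
    (α : Finset (Fin n) → ℝ) (hα0 : ∀ s, 0 ≤ α s)
    (hcover : ∀ i : Fin n, 1 ≤ (𝒮.map fun s => if i ∈ s then α s else 0).sum)
    (p : PMF (∀ i, B i)) :
    shannonEntropy p ≤
      (𝒮.map fun s => α s *
        (shannonEntropy (p.map fun x (j : {j : Fin n // j ∈ s ∪ sStar s}) => x j.1) -
         shannonEntropy (p.map fun x (j : {j : Fin n // j ∈ sStar s}) => x j.1))).sum := by

  classical
  have hbridge : (𝒮.map fun s => α s *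
      (shannonEntropy (p.map fun x (j : {j : Fin n // j ∈ s ∪ sStar s}) => x j.1) -
       shannonEntropy (p.map fun x (j : {j : Fin n // j ∈ sStar s}) => x j.1))).sum
      = (𝒮.map fun s => α s * (MTaux.Hm p (s ∪ sStar s) - MTaux.Hm p (sStar s))).sum := by
    congr 1
    refine Multiset.map_congr rfl fun s _ => ?_
    rw [MTaux.shannon_map p (s ∪ sStar s), MTaux.shannon_map p (sStar s)]
  rw [hbridge, MTaux.shannon_univ p]
  have hcnn : ∀ k : ℕ, 0 ≤ MTaux.Hm p (MTaux.Kp n (k+1)) - MTaux.Hm p (MTaux.Kp n k) :=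
    fun k => sub_nonneg.2 (MTaux.Hm_mono p (MTaux.Kp_subset_succ k))
  calc MTaux.Hm p Finset.univ
      = ∑ k ∈ Finset.range n, (MTaux.Hm p (MTaux.Kp n (k+1)) - MTaux.Hm p (MTaux.Kp n k)) :=
        MTaux.chain p
    _ = ∑ i : Fin n, (MTaux.Hm p (MTaux.Kp n ((i:ℕ)+1)) - MTaux.Hm p (MTaux.Kp n (i:ℕ))) :=
        (Fin.sum_univ_eq_sum_range
          (fun k => MTaux.Hm p (MTaux.Kp n (k+1)) - MTaux.Hm p (MTaux.Kp n k)) n).symm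
    _ ≤ ∑ i : Fin n, (𝒮.map fun s => if i ∈ s then α s else 0).sum *
          (MTaux.Hm p (MTaux.Kp n ((i:ℕ)+1)) - MTaux.Hm p (MTaux.Kp n (i:ℕ))) := by
        refine Finset.sum_le_sum fun i _ => ?_
        exact le_mul_of_one_le_left (hcnn i.1) (hcover i)
    _ = ∑ i : Fin n, (𝒮.map fun s => (if i ∈ s then α s else 0) *
          (MTaux.Hm p (MTaux.Kp n ((i:ℕ)+1)) - MTaux.Hm p (MTaux.Kp n (i:ℕ)))).sum := by
        refine Finset.sum_congr rfl fun i _ => ?_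
        rw [← Multiset.sum_map_mul_right]
    _ = (𝒮.map fun s => ∑ i : Fin n, (if i ∈ s then α s else 0) *
          (MTaux.Hm p (MTaux.Kp n ((i:ℕ)+1)) - MTaux.Hm p (MTaux.Kp n (i:ℕ)))).sum :=
        (MTaux.sum_map_swap 𝒮 Finset.univ _).symm
    _ = (𝒮.map fun s => α s * ∑ i : Fin n, (if i ∈ s then
          (MTaux.Hm p (MTaux.Kp n ((i:ℕ)+1)) - MTaux.Hm p (MTaux.Kp n (i:ℕ))) else 0)).sum := by
        congr 1
        refine Multiset.map_congr rfl fun s _ => ?_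
        rw [Finset.mul_sum]
        refine Finset.sum_congr rfl fun i _ => ?_
        split_ifs
        · ring
        · ring
    _ ≤ (𝒮.map fun s => α s * (MTaux.Hm p (s ∪ sStar s) - MTaux.Hm p (sStar s))).sum := by
        refine Multiset.sum_map_le_sum_map _ _ fun s hs => ?_
        refine mul_le_mul_of_nonneg_left ?_ (hα0 s)
        calc (∑ i : Fin n, (if i ∈ s then
              (MTaux.Hm p (MTaux.Kp n ((i:ℕ)+1)) - MTaux.Hm p (MTaux.Kp n (i:ℕ))) else 0))
            = ∑ k ∈ Finset.range n, (if h : k < n then (if (⟨k,h⟩ : Fin n) ∈ s then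
                (MTaux.Hm p (MTaux.Kp n (k+1)) - MTaux.Hm p (MTaux.Kp n k)) else 0) else 0) := by
              rw [← Fin.sum_univ_eq_sum_range (fun k => if h : k < n then
                (if (⟨k,h⟩ : Fin n) ∈ s then
                  (MTaux.Hm p (MTaux.Kp n (k+1)) - MTaux.Hm p (MTaux.Kp n k)) else 0) else 0) n]
              refine Finset.sum_congr rfl fun i _ => ?_
              rw [dif_pos i.isLt]
          _ ≤ _ := MTaux.perS p s
end

section
/- Fractional-cover projection inequality for sets: for any fractional covering α of a multiset 𝒮 of subsets of [n] and any finite set A ⊆ B_1 × ⋯ × B_n, |A| ≤ Π_{S∈𝒮} |A_S | A_{S_*}|^{α_S}, where |A_T | A_S| := Π_{y ∈ A_{S∩T}} |{a ∈ A_T : π_{S∩T}(a) = y}|^{p(y)} is the geometric-mean conditioned size, p(y) being the probability that a uniformly random point of A projects to y. -/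
attribute [local instance] Classical.propDecidable

/-- The geometric-mean conditioned size `|A_T | A_S|`: the product over `y ∈ A_{S ∩ T}`
of `|{a ∈ A_T : π_{S∩T}(a) = y}| ^ p(y)`, where `p(y)` is the probability that a
uniformly random point of `A` projects to `y`. -/
noncomputable def condSize {n : ℕ} {B : Fin n → Type*} (A : Finset (∀ i, B i))
    (T S : Finset (Fin n)) : ℝ :=
  ∏ y ∈ A.image (fun x (j : {j : Fin n // j ∈ S ∩ T}) => x j.1),
    (((A.image fun x (j : {j : Fin n // j ∈ T}) => x j.1).filter
        (fun a => ∀ j, (hj : j ∈ S ∩ T) →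
          a ⟨j, (Finset.mem_inter.mp hj).2⟩ = y ⟨j, hj⟩)).card : ℝ) ^
      (((A.filter fun x => (fun (j : {j : Fin n // j ∈ S ∩ T}) => x j.1) = y).card : ℝ) /
        (A.card : ℝ))

open Finset

open Finset

lemma sum_rpow_le_rpow_sum' {β : Type*} (I : Finset β) (f : β → ℝ)
    (hf : ∀ b ∈ I, 0 ≤ f b) {σ : ℝ} (hσ : 1 ≤ σ) :
    ∑ b ∈ I, f b ^ σ ≤ (∑ b ∈ I, f b) ^ σ := by
  have hσ0 : 0 ≤ σ - 1 := by linarith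
  have hS : 0 ≤ ∑ b ∈ I, f b := Finset.sum_nonneg hf
  rcases eq_or_lt_of_le hS with h0 | hpos
  · have : ∀ b ∈ I, f b = 0 := by
      intro b hb
      exact le_antisymm (h0 ▸ Finset.single_le_sum hf hb) (hf b hb)
    have h1 : ∑ b ∈ I, f b ^ σ = 0 := by
      apply Finset.sum_eq_zero
      intro b hb
      rw [this b hb, Real.zero_rpow (by linarith)]
    rw [h1]
    exact Real.rpow_nonneg hS σ
  · calc ∑ b ∈ I, f b ^ σ ≤ ∑ b ∈ I, (∑ c ∈ I, f c) ^ (σ - 1) * f b := by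
          apply Finset.sum_le_sum
          intro b hb
          have : f b ^ σ = f b ^ (σ - 1) * f b := by
            rw [← Real.rpow_add_one' (hf b hb) (by linarith)]
            ring_nf
          rw [this]
          exact mul_le_mul_of_nonneg_right
            (Real.rpow_le_rpow (hf b hb) (Finset.single_le_sum hf hb) hσ0)
            (hf b hb)
      _ = (∑ c ∈ I, f c) ^ (σ - 1) * ∑ b ∈ I, f b := by rw [← Finset.mul_sum]
      _ = (∑ b ∈ I, f b) ^ σ := by
          rw [← Real.rpow_add_one' hS (by linarith)]
          ring_nf

lemma holder1 {γ β : Type*} (s : Finset γ) (I : Finset β) (w : γ → ℝ) (f : γ → β → ℝ)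
    (hw : ∀ j ∈ s, 0 ≤ w j) (hw1 : ∑ j ∈ s, w j = 1)
    (hf : ∀ j ∈ s, ∀ b ∈ I, 0 ≤ f j b) :
    ∑ b ∈ I, ∏ j ∈ s, f j b ^ w j ≤ ∏ j ∈ s, (∑ b ∈ I, f j b) ^ w j := by
  set F : γ → ℝ := fun j => ∑ b ∈ I, f j b with hF
  have hFnn : ∀ j ∈ s, 0 ≤ F j := fun j hj => Finset.sum_nonneg (hf j hj)
  by_cases hbad : ∃ j ∈ s, w j ≠ 0 ∧ F j = 0
  · rcases hbad with ⟨j, hjs, hwj, hFj⟩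
    have hf0 : ∀ b ∈ I, f j b = 0 := by
      intro b hb
      exact le_antisymm (hFj ▸ Finset.single_le_sum (hf j hjs) hb) (hf j hjs b hb)
    have : ∑ b ∈ I, ∏ j' ∈ s, f j' b ^ w j' = 0 := by
      apply Finset.sum_eq_zero
      intro b hb
      apply Finset.prod_eq_zero hjs
      rw [hf0 b hb, Real.zero_rpow hwj]
    rw [this]
    exact Finset.prod_nonneg fun j' hj' => Real.rpow_nonneg (hFnn j' hj') _
  · push_neg at hbad
    have key : ∀ b ∈ I, ∏ j ∈ s, f j b ^ w j ≤
        (∏ j ∈ s, F j ^ w j) * ∑ j ∈ s, w j * (f j b / F j) := by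
      intro b hb
      have h1 : ∏ j ∈ s, f j b ^ w j = (∏ j ∈ s, F j ^ w j) * ∏ j ∈ s, (f j b / F j) ^ w j := by
        rw [← Finset.prod_mul_distrib]
        apply Finset.prod_congr rfl
        intro j hj
        by_cases hwj : w j = 0
        · simp [hwj]
        · have hFj : 0 < F j := lt_of_le_of_ne (hFnn j hj) (Ne.symm (hbad j hj hwj))
          rw [← Real.mul_rpow (le_of_lt hFj) (div_nonneg (hf j hj b hb) (le_of_lt hFj))]
          rw [mul_div_cancel₀ _ (ne_of_gt hFj)]
      rw [h1]
      apply mul_le_mul_of_nonneg_left _ (Finset.prod_nonneg fun j hj =>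
        Real.rpow_nonneg (hFnn j hj) _)
      exact Real.geom_mean_le_arith_mean_weighted s w _ hw hw1
        (fun j hj => div_nonneg (hf j hj b hb) (hFnn j hj))
    calc ∑ b ∈ I, ∏ j ∈ s, f j b ^ w j
        ≤ ∑ b ∈ I, (∏ j ∈ s, F j ^ w j) * ∑ j ∈ s, w j * (f j b / F j) :=
          Finset.sum_le_sum key
      _ = (∏ j ∈ s, F j ^ w j) * ∑ j ∈ s, w j * (F j / F j) := by
          rw [← Finset.mul_sum, Finset.sum_comm]
          congr 1
          apply Finset.sum_congr rfl
          intro j hj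
          rw [← Finset.mul_sum, ← Finset.sum_div]
      _ ≤ ∏ j ∈ s, F j ^ w j := by
          have : ∑ j ∈ s, w j * (F j / F j) = 1 := by
            rw [← hw1]
            apply Finset.sum_congr rfl
            intro j hj
            by_cases hwj : w j = 0
            · simp [hwj]
            · have hFj : 0 < F j := lt_of_le_of_ne (hFnn j hj) (Ne.symm (hbad j hj hwj))
              rw [div_self (ne_of_gt hFj), mul_one]
          rw [this, mul_one]

lemma holder2 {γ β : Type*} (s : Finset γ) (I : Finset β) (w : γ → ℝ) (f : γ → β → ℝ)
    (hw : ∀ j ∈ s, 0 ≤ w j) (hw1 : 1 ≤ ∑ j ∈ s, w j)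
    (hf : ∀ j ∈ s, ∀ b ∈ I, 0 ≤ f j b) :
    ∑ b ∈ I, ∏ j ∈ s, f j b ^ w j ≤ ∏ j ∈ s, (∑ b ∈ I, f j b) ^ w j := by
  set σ : ℝ := ∑ j ∈ s, w j with hσdef
  have hσ1 : 1 ≤ σ := hw1
  have hσpos : 0 < σ := by linarith
  have step1 : ∀ b ∈ I, ∏ j ∈ s, f j b ^ w j = ∏ j ∈ s, (f j b ^ σ) ^ (w j / σ) := by
    intro b hb
    apply Finset.prod_congr rfl
    intro j hj
    rw [← Real.rpow_mul (hf j hj b hb), mul_div_cancel₀ _ (ne_of_gt hσpos)]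
  calc ∑ b ∈ I, ∏ j ∈ s, f j b ^ w j
      = ∑ b ∈ I, ∏ j ∈ s, (f j b ^ σ) ^ (w j / σ) := Finset.sum_congr rfl step1
    _ ≤ ∏ j ∈ s, (∑ b ∈ I, f j b ^ σ) ^ (w j / σ) := by
        apply holder1 s I (fun j => w j / σ) (fun j b => f j b ^ σ)
          (fun j hj => div_nonneg (hw j hj) (le_of_lt hσpos))
          (by rw [← Finset.sum_div, ← hσdef, div_self (ne_of_gt hσpos)])
          (fun j hj b hb => Real.rpow_nonneg (hf j hj b hb) σ)
    _ ≤ ∏ j ∈ s, ((∑ b ∈ I, f j b) ^ σ) ^ (w j / σ) := by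
        apply Finset.prod_le_prod
        · intro j hj
          exact Real.rpow_nonneg (Finset.sum_nonneg fun b hb =>
            Real.rpow_nonneg (hf j hj b hb) σ) _
        · intro j hj
          exact Real.rpow_le_rpow (Finset.sum_nonneg fun b hb =>
            Real.rpow_nonneg (hf j hj b hb) σ)
            (sum_rpow_le_rpow_sum' I (f j) (hf j hj) hσ1)
            (div_nonneg (hw j hj) (le_of_lt hσpos))
    _ = ∏ j ∈ s, (∑ b ∈ I, f j b) ^ w j := by
        apply Finset.prod_congr rfl
        intro j hj
        rw [← Real.rpow_mul (Finset.sum_nonneg (hf j hj)), mul_div_cancel₀ _ (ne_of_gt hσpos)]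

noncomputable def projS {ι : Type*} (B : ι → Type*) (A : Finset (∀ i, B i)) (s : Finset ι) :
    Finset (∀ j : {j // j ∈ s}, B j.1) :=
  A.image (fun x j => x j.1)

section step
variable {ι : Type*} [Fintype ι] (B : ι → Type*) (i₀ : ι)

local notation "ι'" => {j : ι // j ≠ i₀}

noncomputable def AbS (A : Finset (∀ i, B i)) (b : B i₀) : Finset (∀ j : ι', B j.1) :=
  (A.filter fun x => x i₀ = b).image (fun x j => x j.1)

lemma card_Ab (A : Finset (∀ i, B i)) (b : B i₀) :
    (AbS B i₀ A b).card = (A.filter fun x => x i₀ = b).card := by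
  apply Finset.card_image_of_injOn
  intro x hx y hy hxy
  funext i
  by_cases h : i = i₀
  · subst h
    rw [(Finset.mem_filter.mp hx).2, (Finset.mem_filter.mp hy).2]
  · exact congrFun hxy ⟨i, h⟩

lemma K1 (A : Finset (∀ i, B i)) (b : B i₀) (s : Finset ι) (hs : i₀ ∉ s) :
    (projS (fun j : ι' => B j.1) (AbS B i₀ A b) (s.subtype (· ≠ i₀))).card ≤
      (projS B A s).card := by
  apply Finset.card_le_card_of_surjOn
    (fun u (j : {j : ι' // j ∈ s.subtype (· ≠ i₀)}) => u ⟨j.1.1, Finset.mem_subtype.mp j.2⟩)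
  intro y hy
  simp only [Finset.coe_sort_coe, Set.mem_image, Finset.mem_coe] at hy ⊢
  rcases Finset.mem_image.mp hy with ⟨z, hz, hzy⟩
  rcases Finset.mem_image.mp hz with ⟨x, hx, hxz⟩
  refine ⟨fun j => x j.1, Finset.mem_image_of_mem _ (Finset.mem_filter.mp hx).1, ?_⟩
  subst hzy hxz
  rfl

lemma K2 (A : Finset (∀ i, B i)) (s : Finset ι) (hs : i₀ ∈ s) :
    ∑ b ∈ A.image (fun x => x i₀),
      ((projS (fun j : ι' => B j.1) (AbS B i₀ A b) (s.subtype (· ≠ i₀))).card : ℝ) ≤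
      ((projS B A s).card : ℝ) := by
  have hfib : (projS B A s).card = ∑ b ∈ A.image (fun x => x i₀),
      ((projS B A s).filter (fun u => u ⟨i₀, hs⟩ = b)).card := by
    apply Finset.card_eq_sum_card_fiberwise
    intro u hu
    rcases Finset.mem_image.mp hu with ⟨x, hx, hxu⟩
    subst hxu
    exact Finset.mem_image_of_mem _ hx
  rw [hfib]
  push_cast
  apply Finset.sum_le_sum
  intro b _
  have : (projS (fun j : ι' => B j.1) (AbS B i₀ A b) (s.subtype (· ≠ i₀))).card ≤
      ((projS B A s).filter (fun u => u ⟨i₀, hs⟩ = b)).card := by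
    apply Finset.card_le_card_of_surjOn
      (fun u (j : {j : ι' // j ∈ s.subtype (· ≠ i₀)}) => u ⟨j.1.1, Finset.mem_subtype.mp j.2⟩)
    intro y hy
    simp only [Finset.coe_sort_coe, Set.mem_image, Finset.mem_coe] at hy ⊢
    rcases Finset.mem_image.mp hy with ⟨z, hz, hzy⟩
    rcases Finset.mem_image.mp hz with ⟨x, hx, hxz⟩
    refine ⟨fun j => x j.1, ?_, ?_⟩
    · exact Finset.mem_filter.mpr ⟨Finset.mem_image_of_mem _ (Finset.mem_filter.mp hx).1,
        (Finset.mem_filter.mp hx).2⟩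
    · subst hzy hxz
      rfl
  exact_mod_cast this

end step

set_option maxHeartbeats 1000000 in
lemma shearer_aux (N : ℕ) : ∀ {ι : Type u} [Fintype ι] (B : ι → Type v)
    {κ : Type w} [Fintype κ] (S : κ → Finset ι) (w : κ → ℝ), (∀ k, 0 ≤ w k) →
    (∀ i : ι, 1 ≤ ∑ k, if i ∈ S k then w k else 0) →
    ∀ A : Finset (∀ i, B i), A.Nonempty → Fintype.card ι ≤ N →
    (A.card : ℝ) ≤ ∏ k, ((projS B A (S k)).card : ℝ) ^ w k := by
  induction N with
  | zero =>
    intro ι _ B κ _ S w hw hcover A hA hcard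
    haveI : IsEmpty ι := Fintype.card_eq_zero_iff.mp (Nat.le_zero.mp hcard)
    have h1 : A.card ≤ 1 := Finset.card_le_one.mpr (fun a _ b _ => Subsingleton.elim a b)
    have h2 : (1 : ℝ) ≤ ∏ k, ((projS B A (S k)).card : ℝ) ^ w k := by
      calc (1:ℝ) = ∏ _k : κ, 1 := by simp
        _ ≤ ∏ k, ((projS B A (S k)).card : ℝ) ^ w k := by
          apply Finset.prod_le_prod (fun _ _ => zero_le_one)
          intro k _
          apply Real.one_le_rpow _ (hw k)
          have : 0 < (projS B A (S k)).card := Finset.card_pos.mpr (hA.image _)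
          exact_mod_cast this
    calc (A.card : ℝ) ≤ 1 := by exact_mod_cast h1
      _ ≤ _ := h2
  | succ N ih =>
    intro ι _ B κ _ S w hw hcover A hA hcard
    rcases isEmpty_or_nonempty ι with hι | hι
    · haveI : IsEmpty ι := hι
      have h1 : A.card ≤ 1 := Finset.card_le_one.mpr (fun a _ b _ => Subsingleton.elim a b)
      have h2 : (1 : ℝ) ≤ ∏ k, ((projS B A (S k)).card : ℝ) ^ w k := by
        calc (1:ℝ) = ∏ _k : κ, 1 := by simp
          _ ≤ ∏ k, ((projS B A (S k)).card : ℝ) ^ w k := by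
            apply Finset.prod_le_prod (fun _ _ => zero_le_one)
            intro k _
            apply Real.one_le_rpow _ (hw k)
            have : 0 < (projS B A (S k)).card := Finset.card_pos.mpr (hA.image _)
            exact_mod_cast this
      calc (A.card : ℝ) ≤ 1 := by exact_mod_cast h1
        _ ≤ _ := h2
    · obtain ⟨i₀⟩ := hι
      set D : Finset (B i₀) := A.image (fun x => x i₀) with hD
      set B' : {j : ι // j ≠ i₀} → Type v := fun j => B j.1 with hB'
      set S' : κ → Finset {j : ι // j ≠ i₀} := fun k => (S k).subtype (· ≠ i₀) with hS'
      set f : κ → B i₀ → ℝ := fun k b => ((projS B' (AbS B i₀ A b) (S' k)).card : ℝ) with hf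
      have hf0 : ∀ k b, 0 ≤ f k b := fun k b => Nat.cast_nonneg _
      -- cardinality of the smaller index type
      have hcard' : Fintype.card {j : ι // j ≠ i₀} ≤ N := by
        have h1 : Fintype.card {j : ι // j ≠ i₀} = Fintype.card ι - 1 := by
          have := Fintype.card_subtype_compl (fun j : ι => j = i₀)
          simpa [Fintype.card_subtype_eq] using this
        have h2 : 0 < Fintype.card ι := Fintype.card_pos_iff.mpr ⟨i₀⟩
        omega
      -- slices are nonempty
      have hAbne : ∀ b ∈ D, (AbS B i₀ A b).Nonempty := by
        intro b hb
        rcases Finset.mem_image.mp hb with ⟨x, hx, rfl⟩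
        exact ⟨_, Finset.mem_image_of_mem _ (Finset.mem_filter.mpr ⟨hx, rfl⟩)⟩
      -- IH applied to each slice
      have hIH : ∀ b ∈ D, (((AbS B i₀ A b).card : ℝ)) ≤ ∏ k, f k b ^ w k := by
        intro b hb
        exact ih B' S' w hw
          (fun i => by
            refine le_trans (hcover i.1) (le_of_eq (Finset.sum_congr rfl fun k _ => ?_))
            by_cases h : (i : ι) ∈ S k <;> simp [hS', Finset.mem_subtype, h])
          (AbS B i₀ A b) (hAbne b hb) hcard'
      -- counting A fiberwise
      have c2 : (A.card : ℝ) = ∑ b ∈ D, ((AbS B i₀ A b).card : ℝ) := by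
        have h := Finset.card_eq_sum_card_fiberwise
          (f := fun x => x i₀) (s := A) (t := D) (fun x hx => Finset.mem_image_of_mem _ hx)
        rw [h]
        push_cast
        exact Finset.sum_congr rfl fun b _ => by rw [card_Ab]
      set K₁ : Finset κ := Finset.univ.filter (fun k => i₀ ∈ S k) with hK₁
      set C : ℝ := ∏ k ∈ Finset.univ.filter (fun k => ¬ i₀ ∈ S k),
        ((projS B A (S k)).card : ℝ) ^ w k with hC
      have hC0 : 0 ≤ C := Finset.prod_nonneg fun k _ => Real.rpow_nonneg (Nat.cast_nonneg _) _
      have hsum1 : 1 ≤ ∑ k ∈ K₁, w k := by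
        refine le_trans (hcover i₀) (le_of_eq ?_)
        rw [hK₁, Finset.sum_filter]
      -- pull out the factors not containing i₀
      have step1 : ∀ b ∈ D, ∏ k, f k b ^ w k ≤ (∏ k ∈ K₁, f k b ^ w k) * C := by
        intro b hb
        rw [← Finset.prod_filter_mul_prod_filter_not Finset.univ (fun k => i₀ ∈ S k)
          (fun k => f k b ^ w k)]
        apply mul_le_mul_of_nonneg_left _ (Finset.prod_nonneg fun k _ =>
          Real.rpow_nonneg (hf0 k b) _)
        apply Finset.prod_le_prod (fun k _ => Real.rpow_nonneg (hf0 k b) _)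
        intro k hk
        apply Real.rpow_le_rpow (hf0 k b) _ (hw k)
        simp only [hf]
        exact_mod_cast K1 B i₀ A b (S k) (Finset.mem_filter.mp hk).2
      -- Hölder step
      have step2 : ∑ b ∈ D, ∏ k ∈ K₁, f k b ^ w k ≤
          ∏ k ∈ K₁, ((projS B A (S k)).card : ℝ) ^ w k := by
        calc ∑ b ∈ D, ∏ k ∈ K₁, f k b ^ w k
            ≤ ∏ k ∈ K₁, (∑ b ∈ D, f k b) ^ w k :=
              holder2 K₁ D w f (fun k _ => hw k) hsum1 (fun k _ b _ => hf0 k b)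
          _ ≤ ∏ k ∈ K₁, ((projS B A (S k)).card : ℝ) ^ w k := by
              apply Finset.prod_le_prod (fun k _ => Real.rpow_nonneg
                (Finset.sum_nonneg fun b _ => hf0 k b) _)
              intro k hk
              apply Real.rpow_le_rpow (Finset.sum_nonneg fun b _ => hf0 k b) _ (hw k)
              simp only [hf]
              exact K2 B i₀ A (S k) (Finset.mem_filter.mp hk).2
      calc (A.card : ℝ) = ∑ b ∈ D, ((AbS B i₀ A b).card : ℝ) := c2
        _ ≤ ∑ b ∈ D, ∏ k, f k b ^ w k := Finset.sum_le_sum hIH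
        _ ≤ ∑ b ∈ D, (∏ k ∈ K₁, f k b ^ w k) * C := Finset.sum_le_sum step1
        _ = (∑ b ∈ D, ∏ k ∈ K₁, f k b ^ w k) * C := by rw [Finset.sum_mul]
        _ ≤ (∏ k ∈ K₁, ((projS B A (S k)).card : ℝ) ^ w k) * C :=
            mul_le_mul_of_nonneg_right step2 hC0
        _ = ∏ k, ((projS B A (S k)).card : ℝ) ^ w k := by
            rw [hC, Finset.prod_filter_mul_prod_filter_not Finset.univ (fun k => i₀ ∈ S k)]

lemma condSize_eq {n : ℕ} {B : Fin n → Type*} (A : Finset (∀ i, B i)) (hA : A.Nonempty)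
    (s : Finset (Fin n)) :
    condSize A s (sStar s) = ((projS B A s).card : ℝ) := by
  have hc : ∀ j : Fin n, j ∉ sStar s ∩ s := by
    intro j hj
    rw [Finset.mem_inter] at hj
    exact lt_irrefl j ((Finset.mem_filter.mp hj.1).2 j hj.2)
  haveI hE : IsEmpty {j : Fin n // j ∈ sStar s ∩ s} := ⟨fun j => hc j.1 j.2⟩
  obtain ⟨a₀, ha₀⟩ := hA
  unfold condSize
  have himg : A.image (fun (x : ∀ i, B i) (j : {j : Fin n // j ∈ sStar s ∩ s}) => x j.1) =
      {fun (j : {j : Fin n // j ∈ sStar s ∩ s}) => a₀ j.1} := by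
    refine Finset.eq_singleton_iff_unique_mem.mpr ⟨Finset.mem_image_of_mem _ ha₀, ?_⟩
    intro y _
    exact Subsingleton.elim y _
  rw [himg, Finset.prod_singleton]
  rw [Finset.filter_true_of_mem (fun a _ => fun j hj => absurd hj (hc j))]
  rw [Finset.filter_true_of_mem (fun x _ => Subsingleton.elim _ _)]
  rw [div_self (by exact_mod_cast Finset.card_ne_zero_of_mem ha₀), Real.rpow_one]
  rfl

lemma list_sum_eq {γ : Type*} (l : List γ) (g : γ → ℝ) :
    ((l : Multiset γ).map g).sum = ∑ k : Fin l.length, g (l.get k) := by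
  rw [Multiset.map_coe, Multiset.sum_coe]
  calc (l.map g).sum = ((List.ofFn l.get).map g).sum := by rw [List.ofFn_get]
    _ = (List.ofFn (g ∘ l.get)).sum := by rw [List.map_ofFn]
    _ = ∑ k : Fin l.length, g (l.get k) := List.sum_ofFn

lemma list_prod_eq {γ : Type*} (l : List γ) (g : γ → ℝ) :
    ((l : Multiset γ).map g).prod = ∏ k : Fin l.length, g (l.get k) := by
  rw [Multiset.map_coe, Multiset.prod_coe]
  calc (l.map g).prod = ((List.ofFn l.get).map g).prod := by rw [List.ofFn_get]
    _ = (List.ofFn (g ∘ l.get)).prod := by rw [List.map_ofFn]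
    _ = ∏ k : Fin l.length, g (l.get k) := List.prod_ofFn

/-- fractional-cover projection inequality for sets:
`|A| ≤ ∏_{S ∈ 𝒮} |A_S | A_{S_*}| ^ α S` for any fractional covering `α` of `𝒮`. -/
theorem stmt13 {n : ℕ} (hn : 2 ≤ n) (B : Fin n → Type*) [∀ i, Fintype (B i)]
    (𝒮 : Multiset (Finset (Fin n))) (hne : ∀ s ∈ 𝒮, s.Nonempty)
    (α : Finset (Fin n) → ℝ) (hα0 : ∀ s, 0 ≤ α s)
    (hcover : ∀ i : Fin n, 1 ≤ (𝒮.map fun s => if i ∈ s then α s else 0).sum)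
    (A : Finset (∀ i, B i)) (hA : A.Nonempty) :
    (A.card : ℝ) ≤ (𝒮.map fun s => condSize A s (sStar s) ^ (α s)).prod := by
  set l : List (Finset (Fin n)) := 𝒮.toList with hl
  have hlm : (l : Multiset (Finset (Fin n))) = 𝒮 := Multiset.coe_toList 𝒮
  rw [← hlm] at hcover ⊢
  rw [list_prod_eq]
  have key := shearer_aux n (ι := Fin n) B (κ := Fin l.length)
    (fun k => l.get k) (fun k => α (l.get k)) (fun k => hα0 _)
    (fun i => by have h := hcover i; rw [list_sum_eq] at h; simpa using h)
    A hA (by simp)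
  refine le_trans key (le_of_eq (Finset.prod_congr rfl fun k _ => ?_))
  rw [condSize_eq A hA]
end

section
/- For a surjection f : 𝒳 → 𝒴 and an X-suitable k, every vector y ∈ R_k(f(X)) has a preimage under f^k lying in R_k(X); i.e., R_k(f(X)) ⊆ f^k(R_k(X)). -/
open scoped ENNReal

attribute [local instance] Classical.propDecidable

/-- The `k`-Ruzsa set of a random variable with distribution `p`: vectors in `𝒳^k` in
which each value `a` appears exactly `k * P(X = a)` times. -/
def ruzsaSet {α : Type*} (k : ℕ) (p : PMF α) : Set (Fin k → α) :=
  {v | ∀ a, ((Finset.univ.filter fun j => v j = a).card : ℝ≥0∞) = k * p a}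

private lemma lift_multiset {α β : Type*} (f : α → β) :
    ∀ (k : ℕ) (v : Fin k → β) (M : Multiset α), M.map f = (List.ofFn v : Multiset β) →
      ∃ w : Fin k → α, f ∘ w = v ∧ ((List.ofFn w : Multiset α)) = M := by
  intro k
  induction k with
  | zero =>
    intro v M h
    refine ⟨Fin.elim0, funext fun j => j.elim0, ?_⟩
    have h0 : M.map f = 0 := by simpa using h
    have hM0 : M = 0 := Multiset.map_eq_zero.mp h0
    simp [hM0]
  | succ n ih =>
    intro v M h
    rw [List.ofFn_succ] at h
    have hmem : v 0 ∈ M.map f := by rw [h]; simp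
    obtain ⟨a, haM, hfa⟩ := Multiset.mem_map.mp hmem
    have hM : a ::ₘ M.erase a = M := Multiset.cons_erase haM
    have h' : (M.erase a).map f = (List.ofFn fun i => v i.succ : Multiset β) := by
      have : (a ::ₘ M.erase a).map f = v 0 ::ₘ (List.ofFn fun i => v i.succ : Multiset β) := by
        rw [hM, h]; rfl
      rw [Multiset.map_cons, hfa] at this
      exact (Multiset.cons_inj_right _).mp this
    obtain ⟨w', hw1, hw2⟩ := ih (fun i => v i.succ) (M.erase a) h'
    refine ⟨Fin.cons a w', ?_, ?_⟩
    · funext j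
      refine Fin.cases ?_ (fun i => ?_) j
      · simpa using hfa
      · simpa using congrFun hw1 i
    · rw [← hM, List.ofFn_succ]
      simp only [Fin.cons_zero, Fin.cons_succ]
      rw [show ((a :: List.ofFn w' : List α) : Multiset α) = a ::ₘ (List.ofFn w' : Multiset α) from rfl, hw2]

private lemma card_filter_eq_count {α : Type*} {k : ℕ} (w : Fin k → α) (a : α) :
    (Finset.univ.filter fun j => w j = a).card
      = Multiset.count a ((List.ofFn w : Multiset α)) := by
  rw [← Fin.univ_val_map, Multiset.count_map]
  simp only [Finset.card, Finset.filter_val]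
  congr 1
  apply Multiset.filter_congr
  intro x _
  exact ⟨Eq.symm, Eq.symm⟩

/-- for a surjection `f : 𝒳 → 𝒴` and an `X`-suitable `k`, every vector in
`R_k(f(X))` has a preimage under `f^k` lying in `R_k(X)`, i.e.
`R_k(f(X)) ⊆ f^k(R_k(X))`. -/
theorem stmt17 {α β : Type*} (p : PMF α) (hfin : p.support.Finite)
    (hrat : ∀ a, ∃ q : ℚ, (p a).toReal = q)
    (f : α → β) (hf : Function.Surjective f)
    (k : ℕ) (hk : ∀ a, ∃ m : ℕ, (k : ℝ≥0∞) * p a = m) :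
    ruzsaSet k (p.map f) ⊆ (fun v => f ∘ v) '' ruzsaSet k p := by
  intro v hv
  classical
  set m : α → ℕ := fun a => (hk a).choose with hm_def
  have hm : ∀ a, (k : ℝ≥0∞) * p a = m a := fun a => (hk a).choose_spec
  set s := hfin.toFinset with hs
  have hzero : ∀ a ∉ s, p a = 0 := by
    intro a ha
    simpa [hs, Set.Finite.mem_toFinset, PMF.mem_support_iff] using ha
  set M : Multiset α := ∑ a ∈ s, Multiset.replicate (m a) a with hM_def
  have hcount : ∀ a, Multiset.count a M = m a := by
    intro a
    rw [hM_def, Multiset.count_sum']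
    by_cases ha : a ∈ s
    · rw [Finset.sum_eq_single a]
      · simp
      · intro b _ hb; simp [Multiset.count_replicate, hb]
      · exact fun h => absurd ha h
    · have : m a = 0 := by
        have := hm a
        rw [hzero a ha, mul_zero] at this
        exact_mod_cast this.symm
      rw [this]
      apply Finset.sum_eq_zero
      intro b hb
      rw [Multiset.count_replicate]
      split
      · next h => exact absurd (h ▸ hb) ha
      · rfl
  -- the key multiset identity
  have hmap : M.map f = (List.ofFn v : Multiset β) := by
    apply Multiset.ext.mpr
    intro b
    have hcast : ((Multiset.count b (M.map f) : ℕ) : ℝ≥0∞)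
        = ((Multiset.count b ((List.ofFn v : Multiset β)) : ℕ) : ℝ≥0∞) := by
      have hleft : ((Multiset.count b (M.map f) : ℕ) : ℝ≥0∞)
          = (k : ℝ≥0∞) * (p.map f) b := by
        rw [hM_def, ← Multiset.coe_mapAddMonoidHom, map_sum (Multiset.mapAddMonoidHom f) _ s]
        simp only [Multiset.coe_mapAddMonoidHom]
        simp only [Multiset.map_replicate]
        rw [Multiset.count_sum']
        simp only [Multiset.count_replicate]
        rw [PMF.map_apply]
        have htsum : (∑' a, if b = f a then p a else 0) = ∑ a ∈ s, if b = f a then p a else 0 := by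
          apply tsum_eq_sum
          intro a ha
          simp [hzero a ha]
        rw [htsum, Finset.mul_sum]
        push_cast
        apply Finset.sum_congr rfl
        intro a _
        rcases eq_or_ne (f a) b with h | h
        · rw [if_pos h, if_pos h.symm]
          exact (hm a).symm
        · rw [if_neg h, if_neg (Ne.symm h), mul_zero]
      have hright : ((Multiset.count b ((List.ofFn v : Multiset β)) : ℕ) : ℝ≥0∞)
          = (k : ℝ≥0∞) * (p.map f) b := by
        rw [← card_filter_eq_count v b]
        exact hv b
      rw [hleft, hright]
    exact_mod_cast hcast
  obtain ⟨w, hw1, hw2⟩ := lift_multiset f k v M hmap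
  refine ⟨w, ?_, hw1⟩
  intro a
  rw [card_filter_eq_count w a, hw2, hcount a, hm a]
end

section
/- Equivalence of Han's inequality and the Loomis–Whitney inequality: the statement '(n−1)H(X_1,...,X_n) ≤ Σ_i H(X_{[n]∖{i}}) for all finitely supported random vectors X' holds if and only if '|A|^{n−1} ≤ Π_i |A_{[n]∖{i}}| for all finite A ⊆ B_1 × ⋯ × B_n over all finite sets B_j'. -/
attribute [local instance] Classical.propDecidable

open Finset Real

namespace Stmt19

variable {X : Type*}

/-- weight of a fiber -/
noncomputable def wt (S : Finset X) (f : X → ℝ) {Y : Type*} (g : X → Y) (y : Y) : ℝ :=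
  ∑ x ∈ S.filter (fun x => g x = y), f x

/-- entropy of the pushforward of the weights `f` on `S` under `g` -/
noncomputable def entS (S : Finset X) (f : X → ℝ) {Y : Type*} (g : X → Y) : ℝ :=
  ∑ y ∈ S.image g, Real.negMulLog (wt S f g y)

variable {S : Finset X} {f : X → ℝ}

lemma wt_pos {Y : Type*} (hf : ∀ x ∈ S, 0 < f x) {g : X → Y} {y : Y}
    (hy : y ∈ S.image g) : 0 < wt S f g y := by
  obtain ⟨x, hx, rfl⟩ := Finset.mem_image.1 hy
  refine Finset.sum_pos' (fun z hz => (hf z (Finset.mem_filter.1 hz).1).le) ?_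
  exact ⟨x, Finset.mem_filter.2 ⟨hx, rfl⟩, hf x hx⟩

lemma sum_wt {Y : Type*} (g : X → Y) : ∑ y ∈ S.image g, wt S f g y = ∑ x ∈ S, f x := by
  unfold wt
  exact Finset.sum_fiberwise_of_maps_to (fun x hx => Finset.mem_image_of_mem g hx) f

lemma entS_eq {Y : Type*} (g : X → Y) :
    entS S f g = -∑ x ∈ S, f x * Real.log (wt S f g (g x)) := by
  unfold entS
  rw [← Finset.sum_fiberwise_of_maps_to (fun x hx => Finset.mem_image_of_mem g hx)
    (fun x => f x * Real.log (wt S f g (g x))), ← Finset.sum_neg_distrib]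
  refine Finset.sum_congr rfl fun y _ => ?_
  have h1 : ∑ x ∈ S.filter (fun x => g x = y), f x * Real.log (wt S f g (g x))
      = ∑ x ∈ S.filter (fun x => g x = y), f x * Real.log (wt S f g y) :=
    Finset.sum_congr rfl (fun x hx => by rw [(Finset.mem_filter.1 hx).2])
  rw [h1, ← Finset.sum_mul, Real.negMulLog]
  show -(wt S f g y) * Real.log (wt S f g y) = -(wt S f g y * Real.log (wt S f g y))
  ring


lemma gibbs {q : X → ℝ} (hf : ∀ x ∈ S, 0 < f x) (hq : ∀ x ∈ S, 0 < q x)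
    (hf1 : ∑ x ∈ S, f x = 1) (hq1 : ∑ x ∈ S, q x ≤ 1) :
    ∑ x ∈ S, f x * Real.log (q x / f x) ≤ 0 := by
  have h : ∀ x ∈ S, f x * Real.log (q x / f x) ≤ q x - f x := by
    intro x hx
    have hfx := hf x hx
    have ht : 0 < q x / f x := div_pos (hq x hx) hfx
    calc f x * Real.log (q x / f x) ≤ f x * (q x / f x - 1) := by
          exact mul_le_mul_of_nonneg_left (Real.log_le_sub_one_of_pos ht) hfx.le
      _ = q x - f x := by field_simp
  calc ∑ x ∈ S, f x * Real.log (q x / f x) ≤ ∑ x ∈ S, (q x - f x) := Finset.sum_le_sum h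
    _ = (∑ x ∈ S, q x) - 1 := by rw [Finset.sum_sub_distrib, hf1]
    _ ≤ 0 := by linarith

lemma entS_id : entS S f id = ∑ x ∈ S, Real.negMulLog (f x) := by
  unfold entS
  rw [Finset.image_id]
  refine Finset.sum_congr rfl fun x hx => ?_
  congr 1
  unfold wt
  rw [show S.filter (fun x' => id x' = x) = {x} by
    ext z; simp only [Finset.mem_filter, Finset.mem_singleton, id_eq]
    exact ⟨fun h => h.2, fun h => ⟨h ▸ hx, h⟩⟩]
  simp

lemma wt_id (hx : x ∈ S) : wt S f id x = f x := by
  unfold wt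
  rw [show S.filter (fun x' => id x' = x) = {x} by
    ext z; simp only [Finset.mem_filter, Finset.mem_singleton, id_eq]
    exact ⟨fun h => h.2, fun h => ⟨h ▸ hx, h⟩⟩]
  simp


lemma wt_nonneg {Y : Type*} (hf0 : ∀ x ∈ S, 0 ≤ f x) (g : X → Y) (y : Y) :
    0 ≤ wt S f g y :=
  Finset.sum_nonneg fun x hx => hf0 x (Finset.mem_filter.1 hx).1

lemma sum_wt_fiber_le {Y W : Type*} (hf0 : ∀ x ∈ S, 0 ≤ f x) (u : X → Y) (m : X → W)
    (a : Y → W) (ha : ∀ x ∈ S, a (u x) = m x) (w0 : W) :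
    ∑ y ∈ (S.filter (fun x => m x = w0)).image u, wt S f u y ≤ wt S f m w0 := by
  set T := (S.filter (fun x => m x = w0)).image u with hT
  set s := S.filter (fun x => u x ∈ T) with hs
  have hfib : ∀ y ∈ T, S.filter (fun x => u x = y) = s.filter (fun x => u x = y) := by
    intro y hy
    ext z
    simp only [hs, Finset.mem_filter, and_assoc]
    exact ⟨fun ⟨h1, h2⟩ => ⟨h1, h2 ▸ hy, h2⟩, fun ⟨h1, _, h3⟩ => ⟨h1, h3⟩⟩
  have h1 : ∑ y ∈ T, wt S f u y = ∑ x ∈ s, f x := by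
    rw [Finset.sum_congr rfl (fun y hy => by rw [wt, hfib y hy])]
    exact Finset.sum_fiberwise_of_maps_to (fun x hx => (Finset.mem_filter.1 hx).2) f
  rw [h1, wt]
  refine Finset.sum_le_sum_of_subset_of_nonneg ?_ (fun x hx _ => hf0 x (Finset.mem_filter.1 hx).1)
  intro z hz
  rw [hs, Finset.mem_filter] at hz
  obtain ⟨hzS, hzT⟩ := hz
  rw [hT, Finset.mem_image] at hzT
  obtain ⟨x'', hx'', hux⟩ := hzT
  rw [Finset.mem_filter] at hx''
  refine Finset.mem_filter.2 ⟨hzS, ?_⟩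
  calc m z = a (u z) := (ha z hzS).symm
    _ = a (u x'') := by rw [hux]
    _ = m x'' := ha x'' hx''.1
    _ = w0 := hx''.2

lemma inner_bound {Y Z W : Type*} (hf0 : ∀ x ∈ S, 0 ≤ f x)
    (u : X → Y) (v : X → Z) (m : X → W) (a : Y → W) (b : Z → W)
    (ha : ∀ x ∈ S, a (u x) = m x) (hb : ∀ x ∈ S, b (v x) = m x)
    (hinj : ∀ x ∈ S, ∀ x' ∈ S, u x = u x' → v x = v x' → x = x') (w0 : W) :
    ∑ x ∈ S.filter (fun x => m x = w0), wt S f u (u x) * wt S f v (v x)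
      ≤ wt S f m w0 * wt S f m w0 := by
  set Fb := S.filter (fun x => m x = w0) with hFb
  have hFbS : ∀ x ∈ Fb, x ∈ S := fun x hx => (Finset.mem_filter.1 hx).1
  have step1 : ∑ x ∈ Fb, wt S f u (u x) * wt S f v (v x)
      = ∑ p ∈ Fb.image (fun x => (u x, v x)), wt S f u p.1 * wt S f v p.2 := by
    rw [Finset.sum_image]
    intro x hx x' hx' hp
    exact hinj x (hFbS x hx) x' (hFbS x' hx')
      (congrArg Prod.fst hp) (congrArg Prod.snd hp)
  have step2 : Fb.image (fun x => (u x, v x)) ⊆ (Fb.image u) ×ˢ (Fb.image v) := by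
    intro p hp
    obtain ⟨x, hx, rfl⟩ := Finset.mem_image.1 hp
    exact Finset.mem_product.2 ⟨Finset.mem_image_of_mem u hx, Finset.mem_image_of_mem v hx⟩
  have step3 : ∑ p ∈ Fb.image (fun x => (u x, v x)), wt S f u p.1 * wt S f v p.2
      ≤ ∑ p ∈ (Fb.image u) ×ˢ (Fb.image v), wt S f u p.1 * wt S f v p.2 :=
    Finset.sum_le_sum_of_subset_of_nonneg step2
      (fun p _ _ => mul_nonneg (wt_nonneg hf0 u p.1) (wt_nonneg hf0 v p.2))
  have step4 : ∑ p ∈ (Fb.image u) ×ˢ (Fb.image v), wt S f u p.1 * wt S f v p.2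
      = (∑ y ∈ Fb.image u, wt S f u y) * (∑ z ∈ Fb.image v, wt S f v z) := by
    rw [Finset.sum_mul_sum, Finset.sum_product]
  have h5 : (∑ y ∈ Fb.image u, wt S f u y) * (∑ z ∈ Fb.image v, wt S f v z)
      ≤ wt S f m w0 * wt S f m w0 := by
    refine mul_le_mul (sum_wt_fiber_le hf0 u m a ha w0) (sum_wt_fiber_le hf0 v m b hb w0)
      (Finset.sum_nonneg fun z _ => wt_nonneg hf0 v z)
      (wt_nonneg hf0 m w0)
  calc ∑ x ∈ Fb, wt S f u (u x) * wt S f v (v x)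
      = ∑ p ∈ Fb.image (fun x => (u x, v x)), wt S f u p.1 * wt S f v p.2 := step1
    _ ≤ _ := step3
    _ = _ := step4
    _ ≤ _ := h5


lemma entS_submodular {Y Z W : Type*} (hf : ∀ x ∈ S, 0 < f x) (hf1 : ∑ x ∈ S, f x = 1)
    (u : X → Y) (v : X → Z) (m : X → W) (a : Y → W) (b : Z → W)
    (ha : ∀ x ∈ S, a (u x) = m x) (hb : ∀ x ∈ S, b (v x) = m x)
    (hinj : ∀ x ∈ S, ∀ x' ∈ S, u x = u x' → v x = v x' → x = x') :
    entS S f id + entS S f m ≤ entS S f u + entS S f v := by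
  have hf0 : ∀ x ∈ S, 0 ≤ f x := fun x hx => (hf x hx).le
  set q : X → ℝ := fun x => wt S f u (u x) * wt S f v (v x) / wt S f m (m x) with hqdef
  have hwu : ∀ x ∈ S, 0 < wt S f u (u x) :=
    fun x hx => wt_pos hf (Finset.mem_image_of_mem u hx)
  have hwv : ∀ x ∈ S, 0 < wt S f v (v x) :=
    fun x hx => wt_pos hf (Finset.mem_image_of_mem v hx)
  have hwm : ∀ x ∈ S, 0 < wt S f m (m x) :=
    fun x hx => wt_pos hf (Finset.mem_image_of_mem m hx)
  have hq : ∀ x ∈ S, 0 < q x := fun x hx =>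
    div_pos (mul_pos (hwu x hx) (hwv x hx)) (hwm x hx)
  have hq1 : ∑ x ∈ S, q x ≤ 1 := by
    have hgrp : ∑ x ∈ S, q x
        = ∑ w0 ∈ S.image m, ∑ x ∈ S.filter (fun x => m x = w0), q x :=
      (Finset.sum_fiberwise_of_maps_to (fun x hx => Finset.mem_image_of_mem m hx) q).symm
    have hinner : ∀ w0 ∈ S.image m, ∑ x ∈ S.filter (fun x => m x = w0), q x ≤ wt S f m w0 := by
      intro w0 hw0
      have hwm0 : 0 < wt S f m w0 := wt_pos hf hw0
      have heq : ∑ x ∈ S.filter (fun x => m x = w0), q x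
          = (∑ x ∈ S.filter (fun x => m x = w0), wt S f u (u x) * wt S f v (v x))
            / wt S f m w0 := by
        rw [Finset.sum_div]
        refine Finset.sum_congr rfl fun x hx => ?_
        rw [hqdef]
        simp only []
        rw [(Finset.mem_filter.1 hx).2]
      rw [heq, div_le_iff₀ hwm0]
      exact inner_bound hf0 u v m a b ha hb hinj w0
    calc ∑ x ∈ S, q x ≤ ∑ w0 ∈ S.image m, wt S f m w0 := by
          rw [hgrp]; exact Finset.sum_le_sum hinner
      _ = 1 := by rw [sum_wt m, hf1]
  have hid : entS S f id = -∑ x ∈ S, f x * Real.log (f x) := by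
    rw [entS_id, ← Finset.sum_neg_distrib]
    exact Finset.sum_congr rfl fun x _ => by rw [Real.negMulLog]; ring
  have key : ∑ x ∈ S, f x * Real.log (q x / f x)
      = (∑ x ∈ S, f x * Real.log (wt S f u (u x)))
        + (∑ x ∈ S, f x * Real.log (wt S f v (v x)))
        - (∑ x ∈ S, f x * Real.log (f x))
        - (∑ x ∈ S, f x * Real.log (wt S f m (m x))) := by
    rw [← Finset.sum_add_distrib, ← Finset.sum_sub_distrib, ← Finset.sum_sub_distrib]
    refine Finset.sum_congr rfl fun x hx => ?_
    have h1 := hwu x hx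
    have h2 := hwv x hx
    have h3 := hwm x hx
    have h4 := hf x hx
    have hq' : q x / f x = wt S f u (u x) * wt S f v (v x) / (wt S f m (m x) * f x) := by
      rw [hqdef]; simp only []; rw [div_div]
    rw [hq', Real.log_div (by positivity) (by positivity), Real.log_mul h1.ne' h2.ne',
      Real.log_mul h3.ne' h4.ne']
    ring
  have hg := gibbs hf hq hf1 hq1
  rw [key] at hg
  rw [hid, entS_eq u, entS_eq v, entS_eq m]
  linarith


lemma entS_const {Y : Type*} [Subsingleton Y] (g : X → Y) (hS : S.Nonempty)
    (hf1 : ∑ x ∈ S, f x = 1) : entS S f g = 0 := by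
  obtain ⟨x0, hx0⟩ := hS
  have himg : S.image g = {g x0} := by
    ext y
    simp only [Finset.mem_image, Finset.mem_singleton]
    exact ⟨fun ⟨x, _, hx⟩ => hx ▸ Subsingleton.elim _ _, fun h => ⟨x0, hx0, h.symm⟩⟩
  rw [entS, himg, Finset.sum_singleton]
  have hw : wt S f g (g x0) = 1 := by
    rw [wt, Finset.filter_true_of_mem (fun x _ => Subsingleton.elim _ _), hf1]
  rw [hw, Real.negMulLog_one]

lemma wt_eq_of_inj {Y : Type*} {g : X → Y}
    (hinj : ∀ x ∈ S, ∀ x' ∈ S, g x = g x' → x = x') {x : X} (hx : x ∈ S) :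
    wt S f g (g x) = f x := by
  rw [wt, show S.filter (fun x' => g x' = g x) = {x} from ?_]
  · simp
  · ext z
    simp only [Finset.mem_filter, Finset.mem_singleton]
    exact ⟨fun ⟨hz, h⟩ => hinj z hz x hx h, fun h => ⟨h ▸ hx, h ▸ rfl⟩⟩

lemma entS_inj {Y : Type*} {g : X → Y}
    (hinj : ∀ x ∈ S, ∀ x' ∈ S, g x = g x' → x = x') :
    entS S f g = entS S f id := by
  rw [entS, Finset.sum_image hinj, entS_id]
  exact Finset.sum_congr rfl fun x hx => by rw [wt_eq_of_inj hinj hx]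

lemma entS_le_log {Y : Type*} (hf : ∀ x ∈ S, 0 < f x) (hf1 : ∑ x ∈ S, f x = 1) (g : X → Y) :
    entS S f g ≤ Real.log ((S.image g).card) := by
  by_cases hS : S.Nonempty
  · set T := S.image g with hT
    have hTne : T.Nonempty := hS.image g
    have hN : 0 < (T.card : ℝ) := by exact_mod_cast Finset.card_pos.2 hTne
    have hw : ∀ y ∈ T, 0 < wt S f g y := fun y hy => wt_pos hf hy
    have hsum : ∑ y ∈ T, wt S f g y = 1 := by rw [sum_wt g, hf1]
    have hq1 : ∑ _y ∈ T, (T.card : ℝ)⁻¹ ≤ 1 := by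
      rw [Finset.sum_const, nsmul_eq_mul, mul_inv_cancel₀ hN.ne']
    have hgb := gibbs (S := T) (f := wt S f g) (q := fun _ => (T.card : ℝ)⁻¹)
      hw (fun _ _ => inv_pos.2 hN) hsum hq1
    have key : ∀ y ∈ T, wt S f g y * Real.log ((T.card : ℝ)⁻¹ / wt S f g y)
        = Real.negMulLog (wt S f g y) - wt S f g y * Real.log (T.card : ℝ) := by
      intro y hy
      rw [Real.log_div (by positivity) (hw y hy).ne', Real.log_inv, Real.negMulLog]
      ring
    rw [Finset.sum_congr rfl key, Finset.sum_sub_distrib, ← Finset.sum_mul, hsum] at hgb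
    rw [entS]
    linarith
  · rw [Finset.not_nonempty_iff_eq_empty] at hS
    subst hS
    simp [entS]


lemma han_core {n : ℕ} (hn : 2 ≤ n) {B : Fin n → Type} (S : Finset (∀ i, B i))
    (f : (∀ i, B i) → ℝ) (hf : ∀ x ∈ S, 0 < f x) (hf1 : ∑ x ∈ S, f x = 1)
    (hS : S.Nonempty) :
    ((n : ℝ) - 1) * entS S f id ≤
      ∑ i : Fin n, entS S f (fun x (j : {j : Fin n // j ≠ i}) => x j.1) := by
  set Pk : (k : ℕ) → (∀ i, B i) → (∀ j : {j : Fin n // j.val < k}, B j.1) :=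
    fun k x j => x j.1 with hPk
  set F : ℕ → ℝ := fun k => entS S f (Pk k) with hF
  have h0 : F 0 = 0 := by
    haveI : IsEmpty {j : Fin n // j.val < 0} := ⟨fun j => Nat.not_lt_zero _ j.2⟩
    exact entS_const (Pk 0) hS hf1
  have hnn : F n = entS S f id := by
    refine entS_inj fun x _ x' _ h => funext fun j => ?_
    exact congrFun h ⟨j, j.isLt⟩
  have step : ∀ i : Fin n,
      entS S f id + F i.val ≤
        entS S f (fun x (j : {j : Fin n // j ≠ i}) => x j.1) + F (i.val + 1) := by
    intro i
    refine entS_submodular hf hf1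
      (fun x (j : {j : Fin n // j ≠ i}) => x j.1) (Pk (i.val + 1)) (Pk i.val)
      (fun y j => y ⟨j.1, fun hji => by have h := j.2; rw [hji] at h; exact lt_irrefl _ h⟩)
      (fun z j => z ⟨j.1, Nat.lt_succ_of_lt j.2⟩)
      (fun x _ => rfl) (fun x _ => rfl) ?_
    intro x _ x' _ hu hv
    funext j
    by_cases hj : j = i
    · subst hj
      exact congrFun hv ⟨j, Nat.lt_succ_self _⟩
    · exact congrFun hu ⟨j, hj⟩
  have hsum : ∑ i : Fin n,
      (entS S f id - entS S f (fun x (j : {j : Fin n // j ≠ i}) => x j.1)) ≤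
      ∑ i : Fin n, (F (i.val + 1) - F i.val) :=
    Finset.sum_le_sum fun i _ => by have := step i; linarith
  have htel : ∑ i : Fin n, (F (i.val + 1) - F i.val) = entS S f id := by
    rw [Fin.sum_univ_eq_sum_range (fun k => F (k + 1) - F k), Finset.sum_range_sub, h0, hnn,
      sub_zero]
  rw [htel, Finset.sum_sub_distrib, Finset.sum_const, Finset.card_univ, Fintype.card_fin,
    nsmul_eq_mul] at hsum
  linarith


section Bridge

variable {p : PMF X} {S : Finset X}

lemma apply_eq_zero_of_notMem (hS : ↑S = p.support) {x : X} (hx : x ∉ S) : p x = 0 := by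
  rw [PMF.apply_eq_zero_iff]
  rw [← hS]
  exact fun h => hx (by exact_mod_cast h)

lemma sum_f_eq_one (hS : ↑S = p.support) : ∑ x ∈ S, (p x).toReal = 1 := by
  have h1 : ∑' x, p x = 1 := p.tsum_coe
  rw [tsum_eq_sum (fun x hx => apply_eq_zero_of_notMem hS hx)] at h1
  have h2 : (∑ x ∈ S, p x).toReal = ∑ x ∈ S, (p x).toReal :=
    ENNReal.toReal_sum (fun x _ => PMF.apply_ne_top p x)
  rw [h1] at h2
  simpa using h2.symm

lemma f_pos (hS : ↑S = p.support) {x : X} (hx : x ∈ S) : 0 < (p x).toReal := by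
  refine ENNReal.toReal_pos ?_ (PMF.apply_ne_top p x)
  refine (PMF.mem_support_iff p x).1 ?_
  rw [← hS]
  exact_mod_cast hx

lemma shannon_eq_entS_id (hS : ↑S = p.support) :
    shannonEntropy p = entS S (fun x => (p x).toReal) id := by
  rw [entS_id, shannonEntropy]
  refine tsum_eq_sum fun x hx => ?_
  rw [apply_eq_zero_of_notMem hS hx]
  simp

lemma map_apply_toReal (hS : ↑S = p.support) {Y : Type*} (g : X → Y) (y : Y) :
    ((p.map g) y).toReal = wt S (fun x => (p x).toReal) g y := by
  rw [PMF.map_apply]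
  rw [tsum_eq_sum (s := S.filter (fun x => g x = y)) (fun x hx => ?_)]
  · rw [wt, ENNReal.toReal_sum (fun x _ => by
      split <;> simp [PMF.apply_ne_top p x])]
    refine Finset.sum_congr rfl fun x hx => ?_
    rw [if_pos ((Finset.mem_filter.1 hx).2).symm]
  · by_cases hxS : x ∈ S
    · have : g x ≠ y := fun h => hx (Finset.mem_filter.2 ⟨hxS, h⟩)
      rw [if_neg (fun h => this h.symm)]
    · rw [apply_eq_zero_of_notMem hS hxS]
      split <;> rfl

lemma shannon_eq_entS_map (hS : ↑S = p.support) {Y : Type*} (g : X → Y) :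
    shannonEntropy (p.map g) = entS S (fun x => (p x).toReal) g := by
  rw [shannonEntropy, entS]
  rw [tsum_eq_sum (s := S.image g) (fun y hy => ?_)]
  · exact Finset.sum_congr rfl fun y _ => by rw [map_apply_toReal hS g y]
  · have : (p.map g) y = 0 := by
      rw [PMF.apply_eq_zero_iff, PMF.support_map, ← hS]
      intro ⟨x, hx, hgx⟩
      exact hy (Finset.mem_image.2 ⟨x, by exact_mod_cast hx, hgx⟩)
    rw [this]
    simp

end Bridge


lemma han_statement {n : ℕ} (hn : 2 ≤ n) (B : Fin n → Type) (p : PMF (∀ i, B i))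
    (hfin : p.support.Finite) :
    (n - 1 : ℝ) * shannonEntropy p ≤
      ∑ i, shannonEntropy (p.map fun x (j : {j : Fin n // j ≠ i}) => x j.1) := by
  set S := hfin.toFinset with hSdef
  have hS : ↑S = p.support := hfin.coe_toFinset
  have hf : ∀ x ∈ S, 0 < (p x).toReal := fun x hx => f_pos hS hx
  have hf1 := sum_f_eq_one hS
  have hSne : S.Nonempty := hfin.toFinset_nonempty.2 p.support_nonempty
  rw [shannon_eq_entS_id hS,
    Finset.sum_congr rfl fun (i : Fin n) _ =>
      shannon_eq_entS_map hS (fun x (j : {j : Fin n // j ≠ i}) => x j.1)]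
  exact han_core hn S _ hf hf1 hSne

set_option maxHeartbeats 1000000 in
lemma lw_statement {n : ℕ} (hn : 2 ≤ n)
    (h : ∀ (B : Fin n → Type) (p : PMF (∀ i, B i)), p.support.Finite →
        (n - 1 : ℝ) * shannonEntropy p ≤
          ∑ i, shannonEntropy (p.map fun x (j : {j : Fin n // j ≠ i}) => x j.1))
    (B : Fin n → Type) (inst : ∀ i, Fintype (B i)) (A : Finset (∀ i, B i)) :
    A.card ^ (n - 1) ≤ ∏ i, (A.image fun x (j : {j : Fin n // j ≠ i}) => x j.1).card := by
  rcases A.eq_empty_or_nonempty with rfl | hA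
  · rw [Finset.card_empty]
    rw [Nat.zero_pow (by omega)]
    exact Nat.zero_le _
  set p := PMF.uniformOfFinset A hA with hp
  have hS : ↑A = p.support := (PMF.support_uniformOfFinset hA).symm
  have hfin : p.support.Finite := by rw [← hS]; exact A.finite_toSet
  have hhan := h B p hfin
  have hc : 0 < (A.card : ℝ) := by exact_mod_cast Finset.card_pos.2 hA
  have happ : ∀ x ∈ A, (p x).toReal = (A.card : ℝ)⁻¹ := by
    intro x hx
    rw [hp, PMF.uniformOfFinset_apply, if_pos hx, ENNReal.toReal_inv]
    simp
  have hent : shannonEntropy p = Real.log A.card := by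
    rw [shannon_eq_entS_id hS, entS_id,
      Finset.sum_congr rfl fun x hx => by rw [happ x hx]]
    rw [Finset.sum_const, nsmul_eq_mul, Real.negMulLog, Real.log_inv]
    field_simp
  have hbound : ∀ i : Fin n,
      shannonEntropy (p.map fun x (j : {j : Fin n // j ≠ i}) => x j.1) ≤
        Real.log ((A.image fun x (j : {j : Fin n // j ≠ i}) => x j.1).card) := by
    intro i
    rw [shannon_eq_entS_map hS]
    have hle := entS_le_log (S := A) (f := fun x => (p x).toReal)
      (fun x hx => f_pos hS hx) (sum_f_eq_one hS)
      (fun x (j : {j : Fin n // j ≠ i}) => x j.1)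
    convert hle using 4
    ext y
    simp [Finset.mem_image]
  have key : ((n - 1 : ℕ) : ℝ) * Real.log A.card ≤
      ∑ i : Fin n, Real.log ((A.image fun x (j : {j : Fin n // j ≠ i}) => x j.1).card) := by
    have h1 : ((n - 1 : ℕ) : ℝ) = (n : ℝ) - 1 := by
      rw [Nat.cast_sub (by omega), Nat.cast_one]
    rw [h1, ← hent]
    calc ((n : ℝ) - 1) * shannonEntropy p ≤ _ := hhan
      _ ≤ _ := Finset.sum_le_sum fun i _ => hbound i
  have hLpos : ∀ i : Fin n,
      (0 : ℝ) < ((A.image fun x (j : {j : Fin n // j ≠ i}) => x j.1).card : ℝ) := by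
    intro i
    exact_mod_cast Finset.card_pos.2 (hA.image _)
  have final : ((A.card : ℝ)) ^ (n - 1) ≤
      ∏ i : Fin n, ((A.image fun x (j : {j : Fin n // j ≠ i}) => x j.1).card : ℝ) := by
    calc ((A.card : ℝ)) ^ (n - 1)
        = Real.exp (((n - 1 : ℕ) : ℝ) * Real.log A.card) := by
          rw [Real.exp_nat_mul, Real.exp_log hc]
      _ ≤ Real.exp (∑ i : Fin n,
            Real.log ((A.image fun x (j : {j : Fin n // j ≠ i}) => x j.1).card)) :=
          Real.exp_le_exp.2 key
      _ = ∏ i : Fin n, Real.exp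
            (Real.log ((A.image fun x (j : {j : Fin n // j ≠ i}) => x j.1).card)) :=
          Real.exp_sum _ _
      _ = _ := Finset.prod_congr rfl fun i _ => Real.exp_log (hLpos i)
  exact_mod_cast final

end Stmt19

/-- equivalence of Han's inequality (for all finitely supported random
vectors with `n` components) and the Loomis–Whitney inequality (for all finite
`A ⊆ B 1 × ⋯ × B n` over all finite sets `B j`). -/
theorem stmt19 (n : ℕ) (hn : 2 ≤ n) :
    (∀ (B : Fin n → Type) (p : PMF (∀ i, B i)), p.support.Finite →
        (n - 1 : ℝ) * shannonEntropy p ≤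
          ∑ i, shannonEntropy (p.map fun x (j : {j : Fin n // j ≠ i}) => x j.1)) ↔
    (∀ (B : Fin n → Type) (_ : ∀ i, Fintype (B i)) (A : Finset (∀ i, B i)),
        A.card ^ (n - 1) ≤
          ∏ i, (A.image fun x (j : {j : Fin n // j ≠ i}) => x j.1).card) := by
  constructor
  · intro h
    exact Stmt19.lw_statement hn h
  · intro _
    exact fun B p hfin => Stmt19.han_statement hn B p hfin
end
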